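/- arXiv:1706.02435 — 8 statements merged into one kernel-verified Lean document; each statement's English description precedes it below -/
import Mathlib

section
/- Let (λ_n)_{n≥1} be a sequence of nonnegative real numbers, let 0 < γ_min < γ*_min, and let N* ≥ 1 be an integer, with √λ_{n+1} − √λ_n ≥ γ_min for all n ≥ 1 and √λ_{n+1} − √λ_n ≥ γ*_min for all n ≥ N*. Then for every ρ > 0: if ρ ≤ λ_{N*} then N_{N*}(ρ) ≤ √ρ/γ_min + √ρ/γ*_min, and if ρ ≥ λ_{N*} then N_{N*}(ρ) ≤ N* − 1 + √ρ/γ*_min. -/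
/-- The counting function `N_n(ρ) = card { k ≥ 1 : 0 < |λ_n - λ_k| ≤ ρ }`. -/
noncomputable def countingFn (lam : ℕ → ℝ) (n : ℕ) (ρ : ℝ) : ℕ :=
  Set.ncard {k : ℕ | 1 ≤ k ∧ 0 < |lam n - lam k| ∧ |lam n - lam k| ≤ ρ}

lemma gap_sum (s : ℕ → ℝ) (γ : ℝ) (n₀ : ℕ)
    (h : ∀ n, n₀ ≤ n → γ ≤ s (n + 1) - s n) :
    ∀ a b, n₀ ≤ a → a ≤ b → ((b : ℝ) - a) * γ ≤ s b - s a := by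
  intro a b ha hab
  induction b, hab using Nat.le_induction with
  | base => simp
  | succ b hb ih =>
    have h1 := h b (ha.trans hb)
    push_cast at ih ⊢
    linarith

lemma card_bound (S : Set ℕ) (Ns m₁ m₂ : ℕ)
    (hsub : S ⊆ ↑((Finset.Icc (Ns - m₁) (Ns + m₂)).erase Ns)) :
    S.ncard ≤ m₁ + m₂ := by
  have hmem : Ns ∈ Finset.Icc (Ns - m₁) (Ns + m₂) := by
    simp [Nat.sub_le, Nat.le_add_right]
  have h1 : S.ncard ≤ ((Finset.Icc (Ns - m₁) (Ns + m₂)).erase Ns).card := by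
    rw [← Set.ncard_coe_finset]
    exact Set.ncard_le_ncard hsub (Finset.finite_toSet _)
  have h2 := Finset.card_erase_of_mem hmem
  have h3 : (Finset.Icc (Ns - m₁) (Ns + m₂)).card = Ns + m₂ + 1 - (Ns - m₁) :=
    Nat.card_Icc _ _
  omega

theorem counting_bound_at_Nstar (lam : ℕ → ℝ) (γmin γmin' : ℝ) (Ns : ℕ)
    (hγ : 0 < γmin) (hγγ : γmin < γmin') (hNs : 1 ≤ Ns)
    (hpos : ∀ n, 1 ≤ n → 0 ≤ lam n)
    (hgap : ∀ n, 1 ≤ n → γmin ≤ Real.sqrt (lam (n + 1)) - Real.sqrt (lam n))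
    (hgap' : ∀ n, Ns ≤ n → γmin' ≤ Real.sqrt (lam (n + 1)) - Real.sqrt (lam n)) :
    ∀ ρ : ℝ, 0 < ρ →
      (ρ ≤ lam Ns →
        (countingFn lam Ns ρ : ℝ) ≤ Real.sqrt ρ / γmin + Real.sqrt ρ / γmin') ∧
      (lam Ns ≤ ρ →
        (countingFn lam Ns ρ : ℝ) ≤ (Ns : ℝ) - 1 + Real.sqrt ρ / γmin') := by
  intro ρ hρ
  have hγ' : 0 < γmin' := hγ.trans hγγ
  set s : ℕ → ℝ := fun n => Real.sqrt (lam n) with hsdef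
  have hs0 : ∀ n, 0 ≤ s n := fun n => Real.sqrt_nonneg _
  have hsq : ∀ n, 1 ≤ n → lam n = s n ^ 2 := fun n hn => (Real.sq_sqrt (hpos n hn)).symm
  have hlow : ∀ a b : ℕ, 1 ≤ a → a ≤ b → ((b : ℝ) - a) * γmin ≤ s b - s a :=
    gap_sum s γmin 1 hgap
  have hhigh : ∀ a b : ℕ, Ns ≤ a → a ≤ b → ((b : ℝ) - a) * γmin' ≤ s b - s a :=
    gap_sum s γmin' Ns hgap'
  have hsρ : 0 < Real.sqrt ρ := Real.sqrt_pos.mpr hρ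
  have hρsq : Real.sqrt ρ * Real.sqrt ρ = ρ := Real.mul_self_sqrt hρ.le
  set m₂ := Nat.floor (Real.sqrt ρ / γmin') with hm₂
  have hm₂le : (m₂ : ℝ) ≤ Real.sqrt ρ / γmin' :=
    Nat.floor_le (by positivity)
  set S := {k : ℕ | 1 ≤ k ∧ 0 < |lam Ns - lam k| ∧ |lam Ns - lam k| ≤ ρ} with hS
  -- upper side bound: k > Ns in S implies k ≤ Ns + m₂
  have hup : ∀ k ∈ S, Ns < k → k ≤ Ns + m₂ := by
    intro k hk hNsk
    obtain ⟨hk1, hkpos, hkρ⟩ := hk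
    have hmono : ((k : ℝ) - Ns) * γmin' ≤ s k - s Ns := hhigh Ns k le_rfl hNsk.le
    have hd : (1 : ℝ) ≤ (k : ℝ) - Ns := by
      have : (Ns : ℝ) + 1 ≤ k := by exact_mod_cast hNsk
      linarith
    have hskNs : s Ns ≤ s k := by nlinarith
    have hlamle : lam Ns ≤ lam k := by
      rw [hsq Ns hNs, hsq k (hNs.trans hNsk.le)]; nlinarith [hs0 Ns, hs0 k]
    have habs : |lam Ns - lam k| = lam k - lam Ns := by
      rw [abs_sub_comm]; exact abs_of_nonneg (by linarith)
    rw [habs] at hkρ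
    have hsq2 : (((k : ℝ) - Ns) * γmin') ^ 2 ≤ ρ := by
      have : lam k - lam Ns = (s k - s Ns) * (s k + s Ns) := by
        rw [hsq Ns hNs, hsq k (hNs.trans hNsk.le)]; ring
      nlinarith [hs0 Ns, hs0 k, mul_le_mul hmono hmono (by positivity)
        (by linarith [hs0 Ns, hs0 k] : (0:ℝ) ≤ s k - s Ns)]
    have hle : ((k : ℝ) - Ns) * γmin' ≤ Real.sqrt ρ := by
      nlinarith
    have : ((k : ℝ) - Ns) ≤ Real.sqrt ρ / γmin' := by
      rw [le_div_iff₀ hγ']; exact hle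
    have : ((k - Ns : ℕ) : ℝ) ≤ Real.sqrt ρ / γmin' := by
      rwa [Nat.cast_sub hNsk.le]
    have := Nat.le_floor this
    omega
  -- lower side, general: bound on Ns - k when ρ ≤ lam Ns
  have hdown : ρ ≤ lam Ns → ∀ k ∈ S, k < Ns →
      Ns ≤ k + Nat.floor (Real.sqrt ρ / γmin) := by
    intro hρNs k hk hkNs
    obtain ⟨hk1, hkpos, hkρ⟩ := hk
    have hmono : ((Ns : ℝ) - k) * γmin ≤ s Ns - s k := hlow k Ns hk1 hkNs.le
    have hd : (1 : ℝ) ≤ (Ns : ℝ) - k := by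
      have : (k : ℝ) + 1 ≤ Ns := by exact_mod_cast hkNs
      linarith
    have hskNs : s k ≤ s Ns := by nlinarith
    have hlamle : lam k ≤ lam Ns := by
      rw [hsq Ns hNs, hsq k hk1]; nlinarith [hs0 Ns, hs0 k]
    have habs : |lam Ns - lam k| = lam Ns - lam k := abs_of_nonneg (by linarith)
    rw [habs] at hkρ
    have hsNsρ : Real.sqrt ρ ≤ s Ns := Real.sqrt_le_sqrt hρNs
    have hfact : lam Ns - lam k = (s Ns - s k) * (s Ns + s k) := by
      rw [hsq Ns hNs, hsq k hk1]; ring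
    have hle : ((Ns : ℝ) - k) * γmin * Real.sqrt ρ ≤ ρ := by
      nlinarith [hs0 k]
    have hle2 : ((Ns : ℝ) - k) * γmin ≤ Real.sqrt ρ := by
      have h' : ((Ns : ℝ) - k) * γmin * Real.sqrt ρ ≤ Real.sqrt ρ * Real.sqrt ρ := by
        rw [hρsq]; exact hle
      exact le_of_mul_le_mul_right h' hsρ
    have : ((Ns : ℝ) - k) ≤ Real.sqrt ρ / γmin := by
      rw [le_div_iff₀ hγ]; exact hle2
    have : ((Ns - k : ℕ) : ℝ) ≤ Real.sqrt ρ / γmin := by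
      rwa [Nat.cast_sub hkNs.le]
    have := Nat.le_floor this
    omega
  have hkne : ∀ k ∈ S, k ≠ Ns := by
    rintro k ⟨_, hkpos, _⟩ rfl
    simp at hkpos
  constructor
  · -- case ρ ≤ lam Ns
    intro hρNs
    set m₁ := Nat.floor (Real.sqrt ρ / γmin) with hm₁
    have hm₁le : (m₁ : ℝ) ≤ Real.sqrt ρ / γmin := Nat.floor_le (by positivity)
    have hsub : S ⊆ ↑((Finset.Icc (Ns - m₁) (Ns + m₂)).erase Ns) := by
      intro k hk
      simp only [Finset.coe_erase, Finset.coe_Icc, Set.mem_diff, Set.mem_Icc,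
        Set.mem_singleton_iff]
      refine ⟨⟨?_, ?_⟩, hkne k hk⟩
      · rcases lt_or_ge k Ns with h | h
        · have := hdown hρNs k hk h; omega
        · omega
      · rcases lt_or_ge Ns k with h | h
        · exact hup k hk h
        · omega
    have := card_bound S Ns m₁ m₂ hsub
    have : (countingFn lam Ns ρ : ℝ) ≤ (m₁ : ℝ) + m₂ := by
      unfold countingFn
      exact_mod_cast this
    calc (countingFn lam Ns ρ : ℝ) ≤ (m₁ : ℝ) + m₂ := this
      _ ≤ Real.sqrt ρ / γmin + Real.sqrt ρ / γmin' := add_le_add hm₁le hm₂le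
  · -- case lam Ns ≤ ρ
    intro hρNs
    set m₁ := Ns - 1 with hm₁
    have hsub : S ⊆ ↑((Finset.Icc (Ns - m₁) (Ns + m₂)).erase Ns) := by
      intro k hk
      simp only [Finset.coe_erase, Finset.coe_Icc, Set.mem_diff, Set.mem_Icc,
        Set.mem_singleton_iff]
      refine ⟨⟨?_, ?_⟩, hkne k hk⟩
      · have := hk.1; omega
      · rcases lt_or_ge Ns k with h | h
        · exact hup k hk h
        · omega
    have hcard := card_bound S Ns m₁ m₂ hsub
    have h1 : (countingFn lam Ns ρ : ℝ) ≤ (m₁ : ℝ) + m₂ := by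
      unfold countingFn
      exact_mod_cast hcard
    have h2 : (m₁ : ℝ) = (Ns : ℝ) - 1 := by
      rw [hm₁, Nat.cast_sub hNs]; norm_num
    calc (countingFn lam Ns ρ : ℝ) ≤ (m₁ : ℝ) + m₂ := h1
      _ ≤ (Ns : ℝ) - 1 + Real.sqrt ρ / γmin' := by rw [h2]; linarith
end

section
/- Let (λ_n)_{n≥1} be a sequence of nonnegative real numbers, let 0 < γ_min < γ*_min, and let N* ≥ 1 be an integer, with √λ_{n+1} − √λ_n ≥ γ_min for all n ≥ 1 and √λ_{n+1} − √λ_n ≥ γ*_min for all n ≥ N*. Then for every n > N* and every ρ > 0: N_n(ρ) ≤ 2√ρ/γ*_min if ρ ≤ λ_n − λ_{N*}; N_n(ρ) ≤ √ρ/γ_min + √ρ/γ*_min if λ_n − λ_{N*} ≤ ρ ≤ λ_n; and N_n(ρ) ≤ n − 1 + √ρ/γ*_min if ρ ≥ λ_n. -/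
private lemma sqrt_sub_le' {a b : ℝ} (ha : 0 ≤ a) (hab : a ≤ b) :
    Real.sqrt b - Real.sqrt a ≤ Real.sqrt (b - a) := by
  have h1 : Real.sqrt b ≤ Real.sqrt a + Real.sqrt (b - a) := by
    have h2 : b ≤ (Real.sqrt a + Real.sqrt (b - a)) ^ 2 := by
      have e1 : Real.sqrt a ^ 2 = a := Real.sq_sqrt ha
      have e2 : Real.sqrt (b - a) ^ 2 = b - a := Real.sq_sqrt (by linarith)
      nlinarith [Real.sqrt_nonneg a, Real.sqrt_nonneg (b - a)]
    calc Real.sqrt b ≤ Real.sqrt ((Real.sqrt a + Real.sqrt (b - a)) ^ 2) :=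
          Real.sqrt_le_sqrt h2
      _ = Real.sqrt a + Real.sqrt (b - a) := by
          rw [Real.sqrt_sq (by positivity)]
  linarith

private lemma chain' (lam : ℕ → ℝ) (γ : ℝ) (N : ℕ)
    (hgap : ∀ m, N ≤ m → γ ≤ Real.sqrt (lam (m + 1)) - Real.sqrt (lam m)) :
    ∀ k m, N ≤ k → k ≤ m →
      ((m : ℝ) - k) * γ ≤ Real.sqrt (lam m) - Real.sqrt (lam k) := by
  intro k m hNk hkm
  induction m, hkm using Nat.le_induction with
  | base => simp
  | succ m hkm ih =>
    have h1 := hgap m (hNk.trans hkm)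
    push_cast
    have e : ((m : ℝ) + 1 - k) * γ = ((m : ℝ) - k) * γ + γ := by ring
    rw [e]
    linarith

theorem counting_bound_above_Nstar (lam : ℕ → ℝ) (γmin γmin' : ℝ) (Ns : ℕ)
    (hγ : 0 < γmin) (hγγ : γmin < γmin') (hNs : 1 ≤ Ns)
    (hpos : ∀ n, 1 ≤ n → 0 ≤ lam n)
    (hgap : ∀ n, 1 ≤ n → γmin ≤ Real.sqrt (lam (n + 1)) - Real.sqrt (lam n))
    (hgap' : ∀ n, Ns ≤ n → γmin' ≤ Real.sqrt (lam (n + 1)) - Real.sqrt (lam n)) :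
    ∀ n, Ns < n → ∀ ρ : ℝ, 0 < ρ →
      (ρ ≤ lam n - lam Ns →
        (countingFn lam n ρ : ℝ) ≤ 2 * Real.sqrt ρ / γmin') ∧
      (lam n - lam Ns ≤ ρ → ρ ≤ lam n →
        (countingFn lam n ρ : ℝ) ≤ Real.sqrt ρ / γmin + Real.sqrt ρ / γmin') ∧
      (lam n ≤ ρ →
        (countingFn lam n ρ : ℝ) ≤ (n : ℝ) - 1 + Real.sqrt ρ / γmin') := by
  intro n hn ρ hρ
  have hγ' : 0 < γmin' := hγ.trans hγγ
  have h1n : 1 ≤ n := hNs.trans hn.le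
  have hsρ : 0 ≤ Real.sqrt ρ := Real.sqrt_nonneg ρ
  have hchain := chain' lam γmin 1 hgap
  have hchain' := chain' lam γmin' Ns hgap'
  -- monotonicity of lam on [1, ∞)
  have hmono : ∀ k m, 1 ≤ k → k ≤ m → lam k ≤ lam m := by
    intro k m hk hkm
    have h := hchain k m hk hkm
    have hk' : (0 : ℝ) ≤ ((m : ℝ) - k) * γmin := by
      have : (k : ℝ) ≤ m := by exact_mod_cast hkm
      nlinarith
    have hsq : Real.sqrt (lam k) ≤ Real.sqrt (lam m) := by linarith
    exact (Real.sqrt_le_sqrt_iff (hpos m (hk.trans hkm))).mp hsq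
  -- strict monotonicity used to show k ≥ Ns in case 1
  have hstrict : ∀ k, 1 ≤ k → k < Ns → lam k < lam Ns := by
    intro k hk hkNs
    have h := hchain k Ns hk hkNs.le
    have h1 : (1 : ℝ) ≤ (Ns : ℝ) - k := by
      have : (k : ℝ) + 1 ≤ Ns := by exact_mod_cast hkNs
      linarith
    have hsq : Real.sqrt (lam k) < Real.sqrt (lam Ns) := by nlinarith
    exact (Real.sqrt_lt_sqrt_iff (hpos k hk)).mp hsq
  set S : Set ℕ := {k : ℕ | 1 ≤ k ∧ 0 < |lam n - lam k| ∧ |lam n - lam k| ≤ ρ} with hSdef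
  -- lower element bound
  have hlow : ∀ (γ : ℝ) (N : ℕ), 0 < γ →
      (∀ k m, N ≤ k → k ≤ m → ((m : ℝ) - k) * γ ≤ Real.sqrt (lam m) - Real.sqrt (lam k)) →
      ∀ k ∈ S, N ≤ k → k < n → ((n : ℝ) - k) * γ ≤ Real.sqrt ρ := by
    intro γ N hγ0 hch k hkS hNk hkn
    obtain ⟨hk1, _, habs⟩ := hkS
    have hle : lam k ≤ lam n := hmono k n hk1 hkn.le
    have habs' : lam n - lam k ≤ ρ := by
      rwa [abs_of_nonneg (by linarith)] at habs
    have h1 := hch k n hNk hkn.le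
    have h2 : Real.sqrt (lam n) - Real.sqrt (lam k) ≤ Real.sqrt (lam n - lam k) :=
      sqrt_sub_le' (hpos k hk1) hle
    have h3 : Real.sqrt (lam n - lam k) ≤ Real.sqrt ρ := Real.sqrt_le_sqrt habs'
    linarith
  -- upper element bound
  set t' : ℕ := ⌊Real.sqrt ρ / γmin'⌋₊ with ht'def
  have ht' : (t' : ℝ) ≤ Real.sqrt ρ / γmin' := Nat.floor_le (by positivity)
  have hB : ∀ k ∈ S, n < k → k ≤ n + t' := by
    intro k hkS hnk
    obtain ⟨hk1, _, habs⟩ := hkS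
    have hle : lam n ≤ lam k := hmono n k h1n hnk.le
    have habs' : lam k - lam n ≤ ρ := by
      rw [abs_of_nonpos (by linarith)] at habs; linarith
    have h1 := hchain' n k hn.le hnk.le
    have h2 : Real.sqrt (lam k) - Real.sqrt (lam n) ≤ Real.sqrt (lam k - lam n) :=
      sqrt_sub_le' (hpos n h1n) hle
    have h3 : Real.sqrt (lam k - lam n) ≤ Real.sqrt ρ := Real.sqrt_le_sqrt habs'
    have h4 : ((k : ℝ) - n) * γmin' ≤ Real.sqrt ρ := by linarith
    have h5 : (k : ℝ) - n ≤ Real.sqrt ρ / γmin' := (le_div_iff₀ hγ').mpr h4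
    have h6 : ((k - n : ℕ) : ℝ) ≤ Real.sqrt ρ / γmin' := by
      rw [Nat.cast_sub hnk.le]; exact h5
    have h7 : k - n ≤ t' := Nat.le_floor h6
    omega
  -- generic count bound
  have hcount : ∀ a : ℕ, (∀ k ∈ S, k < n → a ≤ k) →
      countingFn lam n ρ ≤ (n - a) + t' := by
    intro a ha
    have hsub : S ⊆ ↑(Finset.Ico a n ∪ Finset.Ioc n (n + t')) := by
      intro k hk
      simp only [Finset.coe_union, Finset.coe_Ico, Finset.coe_Ioc, Set.mem_union,
        Set.mem_Ico, Set.mem_Ioc]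
      have hkn : k ≠ n := by
        rintro rfl
        obtain ⟨_, h0, _⟩ := hk
        simp at h0
      rcases lt_or_gt_of_ne hkn with h | h
      · exact Or.inl ⟨ha k hk h, h⟩
      · exact Or.inr ⟨h, hB k hk h⟩
    calc countingFn lam n ρ = S.ncard := rfl
      _ ≤ (Finset.Ico a n ∪ Finset.Ioc n (n + t')).card := by
          rw [← Set.ncard_coe_finset]
          exact Set.ncard_le_ncard hsub (Finset.finite_toSet _)
      _ ≤ (Finset.Ico a n).card + (Finset.Ioc n (n + t')).card := Finset.card_union_le _ _
      _ = (n - a) + t' := by rw [Nat.card_Ico, Nat.card_Ioc]; omega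
  refine ⟨?_, ?_, ?_⟩
  · -- case ρ ≤ lam n - lam Ns
    intro hcase
    have hNsk : ∀ k ∈ S, k < n → Ns ≤ k := by
      intro k hkS hkn
      by_contra hlt
      push_neg at hlt
      have h := hstrict k hkS.1 hlt
      have hle : lam k ≤ lam n := hmono k n hkS.1 hkn.le
      have habs' : lam n - lam k ≤ ρ := by
        have := hkS.2.2
        rwa [abs_of_nonneg (by linarith)] at this
      linarith
    have ha : ∀ k ∈ S, k < n → n - t' ≤ k := by
      intro k hkS hkn
      have h := hlow γmin' Ns hγ' hchain' k hkS (hNsk k hkS hkn) hkn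
      have h2 : (n : ℝ) - k ≤ Real.sqrt ρ / γmin' := (le_div_iff₀ hγ').mpr h
      have h3 : ((n - k : ℕ) : ℝ) ≤ Real.sqrt ρ / γmin' := by
        rw [Nat.cast_sub hkn.le]; exact h2
      have h4 : n - k ≤ t' := Nat.le_floor h3
      omega
    have h1 := hcount (n - t') ha
    have h2 : countingFn lam n ρ ≤ t' + t' := by omega
    have h3 : (countingFn lam n ρ : ℝ) ≤ (t' : ℝ) + t' := by exact_mod_cast h2
    have e : 2 * Real.sqrt ρ / γmin' = Real.sqrt ρ / γmin' + Real.sqrt ρ / γmin' := by ring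
    rw [e]
    linarith
  · -- case lam n - lam Ns ≤ ρ ≤ lam n
    intro _ _
    set t : ℕ := ⌊Real.sqrt ρ / γmin⌋₊ with htdef
    have ht : (t : ℝ) ≤ Real.sqrt ρ / γmin := Nat.floor_le (by positivity)
    have ha : ∀ k ∈ S, k < n → n - t ≤ k := by
      intro k hkS hkn
      have h := hlow γmin 1 hγ hchain k hkS hkS.1 hkn
      have h2 : (n : ℝ) - k ≤ Real.sqrt ρ / γmin := (le_div_iff₀ hγ).mpr h
      have h3 : ((n - k : ℕ) : ℝ) ≤ Real.sqrt ρ / γmin := by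
        rw [Nat.cast_sub hkn.le]; exact h2
      have h4 : n - k ≤ t := Nat.le_floor h3
      omega
    have h1 := hcount (n - t) ha
    have h2 : countingFn lam n ρ ≤ t + t' := by omega
    have h3 : (countingFn lam n ρ : ℝ) ≤ (t : ℝ) + t' := by exact_mod_cast h2
    linarith
  · -- case lam n ≤ ρ
    intro _
    have ha : ∀ k ∈ S, k < n → 1 ≤ k := fun k hkS _ => hkS.1
    have h1 := hcount 1 ha
    have h3 : (countingFn lam n ρ : ℝ) ≤ ((n - 1 : ℕ) : ℝ) + t' := by exact_mod_cast h1
    have h4 : ((n - 1 : ℕ) : ℝ) = (n : ℝ) - 1 := by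
      rw [Nat.cast_sub h1n]; norm_num
    rw [h4] at h3
    linarith
end

section
/- Let (λ_n)_{n≥1} be a sequence of nonnegative real numbers, let 0 < γ_min < γ*_min, and let N* ≥ 1 be an integer, with √λ_{n+1} − √λ_n ≥ γ_min for all n ≥ 1 and √λ_{n+1} − √λ_n ≥ γ*_min for all n ≥ N*. Set M* := (1 − γ_min/γ*_min)(N* − 1). Then for every ρ > 0: if ρ ≤ λ_{N*} then N_{N*}(ρ) ≤ √ρ/γ_min + √ρ/γ*_min, and if ρ ≥ λ_{N*} then N_{N*}(ρ) ≤ M* + 2√ρ/γ*_min. -/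
lemma mul_sub_le_sub_of_forall_le_sub_succ {f : ℕ → ℝ} {g : ℝ} {a : ℕ}
    (hgap : ∀ n, a ≤ n → g ≤ f (n + 1) - f n) {i j : ℕ} (hai : a ≤ i) (hij : i ≤ j) :
    g * ((j - i : ℕ) : ℝ) ≤ f j - f i := by
  induction j, hij using Nat.le_induction with
  | base => simp
  | succ j hij ih =>
    have hstep := hgap j (hai.trans hij)
    rw [Nat.succ_sub hij, Nat.cast_succ]
    linarith

lemma sq_sub_le_sq_sub_sq {x y : ℝ} (hx : 0 ≤ x) (hxy : x ≤ y) : (y - x) ^ 2 ≤ y ^ 2 - x ^ 2 := by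
  nlinarith

lemma sub_le_floor_of_sqrt_gap {lam : ℕ → ℝ} {g ρ : ℝ} {a : ℕ} (hg : 0 < g)
    (hgap : ∀ n, a ≤ n → g ≤ √(lam (n + 1)) - √(lam n)) {i j : ℕ} (hai : a ≤ i) (hij : i ≤ j)
    (hi : 0 ≤ lam i) (hj : 0 ≤ lam j) (hρ : |lam j - lam i| ≤ ρ) :
    j - i ≤ ⌊√ρ / g⌋₊ := by
  have hsum := mul_sub_le_sub_of_forall_le_sub_succ (f := fun n => √(lam n)) hgap hai hij
  have hgd : 0 ≤ g * ((j - i : ℕ) : ℝ) := by positivity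
  have hsq : (g * ((j - i : ℕ) : ℝ)) ^ 2 ≤ ρ :=
    calc (g * ((j - i : ℕ) : ℝ)) ^ 2 ≤ (√(lam j) - √(lam i)) ^ 2 := pow_le_pow_left₀ hgd hsum 2
      _ ≤ √(lam j) ^ 2 - √(lam i) ^ 2 := sq_sub_le_sq_sub_sq (Real.sqrt_nonneg _) (by linarith)
      _ = lam j - lam i := by rw [Real.sq_sqrt hi, Real.sq_sqrt hj]
      _ ≤ ρ := (le_abs_self _).trans hρ
  apply Nat.le_floor
  rw [le_div_iff₀ hg, mul_comm]
  exact Real.le_sqrt_of_sq_le hsq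

lemma ncard_le_min_add_of_forall_mem {S : Set ℕ} {n a b : ℕ}
    (hS : ∀ k ∈ S, 1 ≤ k ∧ k ≠ n ∧ (k < n → n - k ≤ a) ∧ (n < k → k - n ≤ b)) :
    S.ncard ≤ min (n - 1) a + b := by
  have hsub : S ⊆ ↑(Finset.Ico (max 1 (n - a)) n ∪ Finset.Ioc n (n + b)) := by
    intro k hk
    obtain ⟨hk1, hkn, hleft, hright⟩ := hS k hk
    simp only [Finset.coe_union, Finset.coe_Ico, Finset.coe_Ioc, Set.mem_union, Set.mem_Ico,
      Set.mem_Ioc]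
    omega
  calc S.ncard ≤ (Finset.Ico (max 1 (n - a)) n ∪ Finset.Ioc n (n + b)).card :=
        (Set.ncard_le_ncard hsub (Finset.finite_toSet _)).trans_eq (Set.ncard_coe_finset _)
    _ ≤ (Finset.Ico (max 1 (n - a)) n).card + (Finset.Ioc n (n + b)).card :=
        Finset.card_union_le _ _
    _ = min (n - 1) a + b := by rw [Nat.card_Ico, Nat.card_Ioc]; omega

lemma countingFn_le_min_add {lam : ℕ → ℝ} {γ γ' ρ : ℝ} {N : ℕ} (hγ : 0 < γ) (hγ' : 0 < γ')
    (hN : 1 ≤ N) (hpos : ∀ n, 1 ≤ n → 0 ≤ lam n)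
    (hgap : ∀ n, 1 ≤ n → γ ≤ √(lam (n + 1)) - √(lam n))
    (hgap' : ∀ n, N ≤ n → γ' ≤ √(lam (n + 1)) - √(lam n)) :
    countingFn lam N ρ ≤ min (N - 1) ⌊√ρ / γ⌋₊ + ⌊√ρ / γ'⌋₊ := by
  refine ncard_le_min_add_of_forall_mem fun k ⟨hk1, hkpos, hkρ⟩ => ⟨hk1, ?_, ?_, ?_⟩
  · rintro rfl
    simp at hkpos
  · intro hkN
    exact sub_le_floor_of_sqrt_gap hγ hgap hk1 hkN.le (hpos k hk1) (hpos N hN) hkρ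
  · intro hNk
    rw [abs_sub_comm] at hkρ
    exact sub_le_floor_of_sqrt_gap hγ' hgap' le_rfl hNk.le (hpos N hN) (hpos k hk1) hkρ

theorem counting_bound_at_Nstar_Mstar (lam : ℕ → ℝ) (γmin γmin' : ℝ) (Ns : ℕ)
    (hγ : 0 < γmin) (hγγ : γmin < γmin') (hNs : 1 ≤ Ns)
    (hpos : ∀ n, 1 ≤ n → 0 ≤ lam n)
    (hgap : ∀ n, 1 ≤ n → γmin ≤ Real.sqrt (lam (n + 1)) - Real.sqrt (lam n))
    (hgap' : ∀ n, Ns ≤ n → γmin' ≤ Real.sqrt (lam (n + 1)) - Real.sqrt (lam n)) :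
    ∀ ρ : ℝ, 0 < ρ →
      (ρ ≤ lam Ns →
        (countingFn lam Ns ρ : ℝ) ≤ Real.sqrt ρ / γmin + Real.sqrt ρ / γmin') ∧
      (lam Ns ≤ ρ →
        (countingFn lam Ns ρ : ℝ) ≤
          (1 - γmin / γmin') * ((Ns : ℝ) - 1) + 2 * Real.sqrt ρ / γmin') := by
  intro ρ _
  have hγ' : 0 < γmin' := hγ.trans hγγ
  have hcount : (countingFn lam Ns ρ : ℝ) ≤
      min ((Ns : ℝ) - 1) (√ρ / γmin) + √ρ / γmin' := by
    have h := countingFn_le_min_add (ρ := ρ) hγ hγ' hNs hpos hgap hgap'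
    have hleft : ((min (Ns - 1) ⌊√ρ / γmin⌋₊ : ℕ) : ℝ) ≤ min ((Ns : ℝ) - 1) (√ρ / γmin) := by
      rw [Nat.cast_min, Nat.cast_pred hNs]
      exact min_le_min_left _ (Nat.floor_le (by positivity))
    have hright : (⌊√ρ / γmin'⌋₊ : ℝ) ≤ √ρ / γmin' := Nat.floor_le (by positivity)
    exact (Nat.cast_le.mpr h).trans (by push_cast at hleft ⊢; linarith)
  refine ⟨fun _ => hcount.trans (by gcongr; exact min_le_right _ _), fun _ => ?_⟩
  have ht : γmin / γmin' ≤ 1 := (div_le_one hγ').mpr hγγ.le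
  have hweight : γmin / γmin' * (√ρ / γmin) = √ρ / γmin' := by field_simp
  have hconvex : min ((Ns : ℝ) - 1) (√ρ / γmin) ≤
      (1 - γmin / γmin') * ((Ns : ℝ) - 1) + γmin / γmin' * (√ρ / γmin) := by
    have := min_le_left ((Ns : ℝ) - 1) (√ρ / γmin)
    have := min_le_right ((Ns : ℝ) - 1) (√ρ / γmin)
    nlinarith [div_pos hγ hγ']
  have htwo : 2 * √ρ / γmin' = √ρ / γmin' + √ρ / γmin' := by ring
  linarith
end

section
/- Let (λ_n)_{n≥1} be a sequence of nonnegative real numbers, let 0 < γ_min < γ*_min, and let N* ≥ 1 be an integer, with √λ_{n+1} − √λ_n ≥ γ_min for all n ≥ 1 and √λ_{n+1} − √λ_n ≥ γ*_min for all n ≥ N*. Set M* := (1 − γ_min/γ*_min)(N* − 1). Then for every n < N* and every ρ > 0: (i) N_n(ρ) ≤ 2√ρ/γ_min if ρ ≤ max{λ_n, λ_{N*} − λ_n}, and N_n(ρ) ≤ M* + (1+√2)√ρ/γ*_min if ρ ≥ max{λ_n, λ_{N*} − λ_n}; (ii) N_n(ρ) ≤ 2√ρ/γ_min if ρ ≤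 λ_{N*}, and N_n(ρ) ≤ M* + 2√ρ/γ*_min if ρ ≥ λ_{N*}. -/
private lemma tele_gap (f : ℕ → ℝ) (c : ℝ) (a : ℕ)
    (h : ∀ m, a ≤ m → c ≤ f (m + 1) - f m) :
    ∀ j, a ≤ j → ∀ k, j ≤ k → ((k : ℝ) - (j : ℝ)) * c ≤ f k - f j := by
  intro j haj k hjk
  induction k, hjk using Nat.le_induction with
  | base => simp
  | succ k hk ih =>
    have h1 := h k (haj.trans hk)
    push_cast at ih ⊢
    linarith

theorem counting_bound_below_Nstar_Mstar (lam : ℕ → ℝ) (γmin γmin' : ℝ) (Ns : ℕ)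
    (hγ : 0 < γmin) (hγγ : γmin < γmin') (hNs : 1 ≤ Ns)
    (hpos : ∀ n, 1 ≤ n → 0 ≤ lam n)
    (hgap : ∀ n, 1 ≤ n → γmin ≤ Real.sqrt (lam (n + 1)) - Real.sqrt (lam n))
    (hgap' : ∀ n, Ns ≤ n → γmin' ≤ Real.sqrt (lam (n + 1)) - Real.sqrt (lam n)) :
    ∀ n, 1 ≤ n → n < Ns → ∀ ρ : ℝ, 0 < ρ →
      (ρ ≤ max (lam n) (lam Ns - lam n) →
        (countingFn lam n ρ : ℝ) ≤ 2 * Real.sqrt ρ / γmin) ∧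
      (max (lam n) (lam Ns - lam n) ≤ ρ →
        (countingFn lam n ρ : ℝ) ≤
          (1 - γmin / γmin') * ((Ns : ℝ) - 1) +
            (1 + Real.sqrt 2) * Real.sqrt ρ / γmin') ∧
      (ρ ≤ lam Ns →
        (countingFn lam n ρ : ℝ) ≤ 2 * Real.sqrt ρ / γmin) ∧
      (lam Ns ≤ ρ →
        (countingFn lam n ρ : ℝ) ≤
          (1 - γmin / γmin') * ((Ns : ℝ) - 1) + 2 * Real.sqrt ρ / γmin') := by
  intro n hn1 hnNs ρ hρ
  have hγ' : 0 < γmin' := hγ.trans hγγ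
  have htele : ∀ j : ℕ, 1 ≤ j → ∀ k : ℕ, j ≤ k →
      ((k : ℝ) - (j : ℝ)) * γmin ≤ Real.sqrt (lam k) - Real.sqrt (lam j) :=
    tele_gap (fun k => Real.sqrt (lam k)) γmin 1 hgap
  have htele' : ∀ k, Ns ≤ k →
      ((k : ℝ) - (Ns : ℝ)) * γmin' ≤ Real.sqrt (lam k) - Real.sqrt (lam Ns) :=
    tele_gap (fun k => Real.sqrt (lam k)) γmin' Ns hgap' Ns le_rfl
  have hquad : ∀ j : ℕ, 1 ≤ j → ∀ k : ℕ, j ≤ k →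
      (((k : ℝ) - (j : ℝ)) * γmin) ^ 2 ≤ lam k - lam j := by
    intro j hj k hjk
    have h1 := htele j hj k hjk
    have h2 : (0:ℝ) ≤ ((k : ℝ) - (j : ℝ)) * γmin :=
      mul_nonneg (sub_nonneg.2 (by exact_mod_cast hjk)) hγ.le
    have h3 : Real.sqrt (lam j) ^ 2 = lam j := Real.sq_sqrt (hpos j hj)
    have h4 : Real.sqrt (lam k) ^ 2 = lam k := Real.sq_sqrt (hpos k (hj.trans hjk))
    nlinarith [Real.sqrt_nonneg (lam j), Real.sqrt_nonneg (lam k)]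
  -- the set is always trapped near n
  have hS : {k : ℕ | 1 ≤ k ∧ 0 < |lam n - lam k| ∧ |lam n - lam k| ≤ ρ} =
      {k : ℕ | 1 ≤ k ∧ 0 < |lam n - lam k| ∧ |lam n - lam k| ≤ ρ} := rfl
  -- small bound (holds unconditionally)
  have hsmall : (countingFn lam n ρ : ℝ) ≤ 2 * Real.sqrt ρ / γmin := by
    set d : ℕ := ⌊Real.sqrt ρ / γmin⌋₊ with hd_def
    have hdle : (d : ℝ) ≤ Real.sqrt ρ / γmin := Nat.floor_le (by positivity)
    have hsub : {k : ℕ | 1 ≤ k ∧ 0 < |lam n - lam k| ∧ |lam n - lam k| ≤ ρ} ⊆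
        ↑((Finset.Icc (n - d) (n + d)).erase n) := by
      intro k hk
      obtain ⟨hk1, hkpos, hkρ⟩ := hk
      have hkn : k ≠ n := by rintro rfl; simp at hkpos
      simp only [Finset.coe_erase, Set.mem_diff, Finset.mem_coe, Finset.mem_Icc,
        Set.mem_singleton_iff]
      have habs := abs_le.1 hkρ
      refine ⟨⟨?_, ?_⟩, hkn⟩
      · -- n - d ≤ k
        rcases le_or_gt n k with h | h
        · omega
        · have hq := hquad k hk1 n h.le
          have hle : lam n - lam k ≤ ρ := habs.2
          have hx : (0:ℝ) ≤ ((n : ℝ) - (k : ℝ)) * γmin :=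
            mul_nonneg (sub_nonneg.2 (by exact_mod_cast h.le)) hγ.le
          have hsq : (((n : ℝ) - (k : ℝ)) * γmin) ^ 2 ≤ ρ := by linarith
          have h5 : ((n : ℝ) - (k : ℝ)) * γmin ≤ Real.sqrt ρ := by
            have := Real.sqrt_le_sqrt hsq
            rwa [Real.sqrt_sq hx] at this
          have h6 : ((n - k : ℕ) : ℝ) ≤ Real.sqrt ρ / γmin := by
            rw [le_div_iff₀ hγ]
            push_cast [Nat.cast_sub h.le]
            linarith
          have := Nat.le_floor h6
          omega
      · -- k ≤ n + d
        rcases le_or_gt k n with h | h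
        · omega
        · have hq := hquad n hn1 k h.le
          have hle : lam k - lam n ≤ ρ := by linarith [habs.1]
          have hx : (0:ℝ) ≤ ((k : ℝ) - (n : ℝ)) * γmin :=
            mul_nonneg (sub_nonneg.2 (by exact_mod_cast h.le)) hγ.le
          have hsq : (((k : ℝ) - (n : ℝ)) * γmin) ^ 2 ≤ ρ := by linarith
          have h5 : ((k : ℝ) - (n : ℝ)) * γmin ≤ Real.sqrt ρ := by
            have := Real.sqrt_le_sqrt hsq
            rwa [Real.sqrt_sq hx] at this
          have h6 : ((k - n : ℕ) : ℝ) ≤ Real.sqrt ρ / γmin := by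
            rw [le_div_iff₀ hγ]
            push_cast [Nat.cast_sub h.le]
            linarith
          have := Nat.le_floor h6
          omega
    have h1 : countingFn lam n ρ ≤ ((Finset.Icc (n - d) (n + d)).erase n).card := by
      rw [countingFn, ← Set.ncard_coe_finset]
      exact Set.ncard_le_ncard hsub (Finset.finite_toSet _)
    have h2 : ((Finset.Icc (n - d) (n + d)).erase n).card ≤ 2 * d := by
      rw [Finset.card_erase_of_mem (Finset.mem_Icc.2 ⟨Nat.sub_le _ _, Nat.le_add_right _ _⟩),
        Nat.card_Icc]
      omega
    have h3 : (countingFn lam n ρ : ℝ) ≤ (2 * d : ℕ) := by exact_mod_cast h1.trans h2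
    have : ((2 * d : ℕ) : ℝ) ≤ 2 * Real.sqrt ρ / γmin := by
      push_cast
      rw [mul_div_assoc]
      linarith
    linarith
  -- big bound
  have hbig : lam n ≤ ρ → lam Ns ≤ 2 * ρ →
      (countingFn lam n ρ : ℝ) ≤ (1 - γmin / γmin') * ((Ns : ℝ) - 1) +
        Real.sqrt 2 * Real.sqrt ρ / γmin' := by
    intro hlamn hlamNs
    have hNs2 : 2 ≤ Ns := by omega
    set A : ℝ := Real.sqrt 2 * Real.sqrt ρ with hA_def
    set e : ℕ := ⌊(A - Real.sqrt (lam Ns)) / γmin'⌋₊ with he_def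
    have hμNs : Real.sqrt (lam Ns) ≤ A := by
      rw [hA_def, ← Real.sqrt_mul (by norm_num : (0:ℝ) ≤ 2) ρ]
      exact Real.sqrt_le_sqrt hlamNs
    have hekey : (e : ℝ) * γmin' + Real.sqrt (lam Ns) ≤ A := by
      rcases le_or_gt 0 ((A - Real.sqrt (lam Ns)) / γmin') with h | h
      · have h1 : (e : ℝ) ≤ (A - Real.sqrt (lam Ns)) / γmin' := Nat.floor_le h
        rw [le_div_iff₀ hγ'] at h1
        linarith
      · have he0 : e = 0 := Nat.floor_eq_zero.2 (h.trans (by norm_num))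
        rw [he0]
        push_cast
        linarith
    have hsub : {k : ℕ | 1 ≤ k ∧ 0 < |lam n - lam k| ∧ |lam n - lam k| ≤ ρ} ⊆
        ↑((Finset.Icc 1 (Ns - 1)).erase n ∪ Finset.Icc Ns (Ns + e)) := by
      intro k hk
      obtain ⟨hk1, hkpos, hkρ⟩ := hk
      have hkn : k ≠ n := by rintro rfl; simp at hkpos
      have habs := abs_le.1 hkρ
      simp only [Finset.coe_union, Set.mem_union, Finset.mem_coe, Finset.mem_erase,
        Finset.mem_Icc]
      rcases lt_or_ge k Ns with h | h
      · left; exact ⟨hkn, hk1, by omega⟩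
      · right
        refine ⟨h, ?_⟩
        have hlamk : lam k ≤ 2 * ρ := by linarith [habs.1]
        have hμk : Real.sqrt (lam k) ≤ A := by
          rw [hA_def, ← Real.sqrt_mul (by norm_num : (0:ℝ) ≤ 2) ρ]
          exact Real.sqrt_le_sqrt hlamk
        have h1 := htele' k h
        have h2 : ((k - Ns : ℕ) : ℝ) ≤ (A - Real.sqrt (lam Ns)) / γmin' := by
          rw [le_div_iff₀ hγ']
          push_cast [Nat.cast_sub h]
          linarith
        have := Nat.le_floor h2
        omega
    have h1 : countingFn lam n ρ ≤
        ((Finset.Icc 1 (Ns - 1)).erase n ∪ Finset.Icc Ns (Ns + e)).card := by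
      rw [countingFn, ← Set.ncard_coe_finset]
      exact Set.ncard_le_ncard hsub (Finset.finite_toSet _)
    have h2 : ((Finset.Icc 1 (Ns - 1)).erase n ∪ Finset.Icc Ns (Ns + e)).card ≤
        (Ns - 2) + (e + 1) := by
      refine (Finset.card_union_le _ _).trans ?_
      have hmem : n ∈ Finset.Icc 1 (Ns - 1) := Finset.mem_Icc.2 ⟨hn1, by omega⟩
      rw [Finset.card_erase_of_mem hmem, Nat.card_Icc, Nat.card_Icc]
      omega
    have h3 : (countingFn lam n ρ : ℝ) ≤ ((Ns - 2) + (e + 1) : ℕ) := by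
      exact_mod_cast h1.trans h2
    have hcast : (((Ns - 2) + (e + 1) : ℕ) : ℝ) = (Ns : ℝ) - 1 + e := by
      push_cast [Nat.cast_sub hNs2]
      ring
    rw [hcast] at h3
    -- key linear estimate
    have hμNslb : ((Ns : ℝ) - 1) * γmin ≤ Real.sqrt (lam Ns) := by
      have := htele 1 le_rfl Ns hNs
      have h0 : 0 ≤ Real.sqrt (lam 1) := Real.sqrt_nonneg _
      push_cast at this
      linarith
    have key : (e : ℝ) * γmin' + ((Ns : ℝ) - 1) * γmin ≤ A := by linarith
    have hrw : (1 - γmin / γmin') * ((Ns : ℝ) - 1) + A / γmin' =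
        ((Ns : ℝ) - 1) + (A - ((Ns : ℝ) - 1) * γmin) / γmin' := by
      field_simp
      ring
    have h4 : (e : ℝ) ≤ (A - ((Ns : ℝ) - 1) * γmin) / γmin' := by
      rw [le_div_iff₀ hγ']
      linarith
    calc (countingFn lam n ρ : ℝ) ≤ (Ns : ℝ) - 1 + e := h3
      _ ≤ ((Ns : ℝ) - 1) + (A - ((Ns : ℝ) - 1) * γmin) / γmin' := by linarith
      _ = (1 - γmin / γmin') * ((Ns : ℝ) - 1) + A / γmin' := hrw.symm
      _ = (1 - γmin / γmin') * ((Ns : ℝ) - 1) + Real.sqrt 2 * Real.sqrt ρ / γmin' := rfl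
  have hlamnNs : lam n ≤ lam Ns := by
    have h1 := htele n hn1 Ns hnNs.le
    have h2 : Real.sqrt (lam n) ≤ Real.sqrt (lam Ns) := by
      have hx : (0:ℝ) ≤ ((Ns : ℝ) - (n : ℝ)) * γmin :=
        mul_nonneg (sub_nonneg.2 (by exact_mod_cast hnNs.le)) hγ.le
      linarith
    have h3 : Real.sqrt (lam n) ^ 2 = lam n := Real.sq_sqrt (hpos n hn1)
    have h4 : Real.sqrt (lam Ns) ^ 2 = lam Ns := Real.sq_sqrt (hpos Ns hNs)
    nlinarith [Real.sqrt_nonneg (lam n)]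
  have hsqrt2 : Real.sqrt 2 ≤ 2 := by
    nlinarith [Real.sq_sqrt (by norm_num : (0:ℝ) ≤ 2), Real.sqrt_nonneg 2]
  have hρdiv : 0 ≤ Real.sqrt ρ / γmin' := by positivity
  refine ⟨fun _ => hsmall, ?_, fun _ => hsmall, ?_⟩
  · intro h
    have hlamn : lam n ≤ ρ := (le_max_left _ _).trans h
    have hlamNs : lam Ns ≤ 2 * ρ := by
      have := (le_max_right _ _).trans h
      linarith
    refine (hbig hlamn hlamNs).trans ?_
    have : Real.sqrt 2 * Real.sqrt ρ / γmin' ≤ (1 + Real.sqrt 2) * Real.sqrt ρ / γmin' := by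
      rw [mul_div_assoc, mul_div_assoc]
      have : Real.sqrt 2 ≤ 1 + Real.sqrt 2 := by linarith
      nlinarith
    linarith
  · intro h
    have hlamn : lam n ≤ ρ := hlamnNs.trans h
    have hlamNs : lam Ns ≤ 2 * ρ := by linarith
    refine (hbig hlamn hlamNs).trans ?_
    have : Real.sqrt 2 * Real.sqrt ρ / γmin' ≤ 2 * Real.sqrt ρ / γmin' := by
      rw [mul_div_assoc, mul_div_assoc]
      nlinarith
    linarith
end

section
/- There exists an absolute constant C_u > 0 with the following property: for every γ_min > 0 and every sequence (λ_n)_{n≥1} of nonnegative real numbers with √λ_{n+1} − √λ_n ≥ γ_min for all n ≥ 1, for every m ≥ 1 the infinite product F_m(z) := ∏_{k≥1, k≠m} (1 − ((iz − λ_m)/(λ_k − λ_m))²) converges locally uniformly on ℂ, defines an entire function with F_m(−i λ_n) = δ_{mn} for all m, n ≥ 1, and satisfies |F_m(z)| ≤ e^{(C_u/γ_min)√λ_m} · e^{(C_u/γ_min)√|z|} for all z ∈ ℂ. -/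
/-!
The gap condition gives `|λ_k - λ_m| ≥ γ² (k - m)²`, so the `k`-th factor of `F_m` is `1 - a_k²`
with `‖a_k‖ ≤ ‖iz - λ_m‖ / (γ² (k - m)²)`. This is summable in `k`, locally uniformly in `z`,
which gives locally uniform convergence and holomorphy. With `s = √‖iz - λ_m‖ / γ` it also bounds
every partial product by `(∏_{j ≠ 0} (1 + s² / j²))²`, and Euler's product
`∏_{j ≥ 1} (1 + s² / j²) = sinh (π s) / (π s) ≤ e^{π s}` turns this into `e^{4 π s}`; finally
`√‖iz - λ_m‖ ≤ √λ_m + √‖z‖`, so `C_u = 4 π` works.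
-/

open Finset Real Filter Topology
open Complex (I)

lemma Real.sinh_le_mul_exp (x : ℝ) : sinh x ≤ x * exp x := by
  have h := add_one_le_exp (-(2 * x))
  have hsplit : exp (-x) = exp x * exp (-(2 * x)) := by rw [← exp_add]; ring_nf
  rw [sinh_eq, hsplit]
  nlinarith [exp_pos x]

lemma Real.tendsto_euler_sinh_prod (x : ℝ) :
    Tendsto (fun n : ℕ => π * x * ∏ j ∈ range n, (1 + x ^ 2 / ((j : ℝ) + 1) ^ 2))
      atTop (𝓝 (sinh (π * x))) := by
  convert (Complex.continuous_im.tendsto _).comp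
    (Complex.tendsto_euler_sin_prod (x * I)) using 1
  · ext1 n
    rw [Function.comp_apply, show ((π : ℂ) * (x * I) *
        ∏ j ∈ range n, (1 - (x * I) ^ 2 / ((j : ℂ) + 1) ^ 2))
      = ((π * x * ∏ j ∈ range n, (1 + x ^ 2 / ((j : ℝ) + 1) ^ 2) : ℝ) : ℂ) * I by
      push_cast; rw [mul_pow, Complex.I_sq]; ring_nf, Complex.mul_I_im, Complex.ofReal_re]
  · rw [← mul_assoc, Complex.sin_mul_I, ← Complex.ofReal_mul, ← Complex.ofReal_sinh,
      Complex.mul_I_im, Complex.ofReal_re]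

lemma prod_range_one_add_sq_div_sq_le_exp {s : ℝ} (hs : 0 ≤ s) (n : ℕ) :
    ∏ j ∈ range n, (1 + s ^ 2 / ((j : ℝ) + 1) ^ 2) ≤ exp (π * s) := by
  rcases hs.eq_or_lt with rfl | hs
  · simp
  have hmono : Monotone fun n : ℕ => π * s * ∏ j ∈ range n, (1 + s ^ 2 / ((j : ℝ) + 1) ^ 2) := by
    refine monotone_nat_of_le_succ fun n => ?_
    rw [prod_range_succ, ← mul_assoc]
    exact le_mul_of_one_le_right (by positivity) (le_add_of_nonneg_right (by positivity))
  have h := (hmono.ge_of_tendsto (tendsto_euler_sinh_prod s) n).trans (sinh_le_mul_exp _)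
  exact le_of_mul_le_mul_left h (by positivity)

/-- The factor `j = 0` is `1`, since `s ^ 2 / 0 = 0`. -/
lemma prod_one_add_sq_div_sq_le_exp {s : ℝ} (hs : 0 ≤ s) (B : Finset ℕ) :
    ∏ j ∈ B, (1 + s ^ 2 / (j : ℝ) ^ 2) ≤ exp (π * s) :=
  calc ∏ j ∈ B, (1 + s ^ 2 / (j : ℝ) ^ 2)
      ≤ ∏ j ∈ range (B.sup id + 1), (1 + s ^ 2 / (j : ℝ) ^ 2) :=
        prod_le_prod_of_subset_of_one_le (subset_range_sup_succ B) (fun _ _ => by positivity)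
          fun _ _ _ => le_add_of_nonneg_right (by positivity)
    _ ≤ exp (π * s) := by
        rw [prod_range_succ']
        simpa using prod_range_one_add_sq_div_sq_le_exp hs _

lemma prod_int_one_add_sq_div_sq_le_exp {s : ℝ} (hs : 0 ≤ s) (T : Finset ℤ) :
    ∏ j ∈ T, (1 + s ^ 2 / (j : ℝ) ^ 2) ≤ exp (2 * π * s) := by
  set g : ℕ → ℝ := fun b => 1 + s ^ 2 / (b : ℝ) ^ 2
  have hg : ∀ b, 1 ≤ g b := fun b => le_add_of_nonneg_right (by positivity)
  have hfiber : ∀ b, #{j ∈ T | j.natAbs = b} ≤ 2 := fun b =>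
    (card_le_card (t := {(b : ℤ), -(b : ℤ)}) fun j hj => by
      rw [mem_filter] at hj
      rcases Int.natAbs_eq j with h | h <;> rw [hj.2] at h <;> simp [h]).trans card_le_two
  calc ∏ j ∈ T, (1 + s ^ 2 / (j : ℝ) ^ 2) = ∏ j ∈ T, g j.natAbs := by
        simp [g, Nat.cast_natAbs]
    _ = ∏ b ∈ T.image Int.natAbs, g b ^ #{j ∈ T | j.natAbs = b} := prod_comp g _
    _ ≤ ∏ b ∈ T.image Int.natAbs, g b ^ 2 :=
        prod_le_prod (fun _ _ => by positivity) fun b _ => pow_le_pow_right₀ (hg b) (hfiber b)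
    _ = (∏ b ∈ T.image Int.natAbs, g b) ^ 2 := prod_pow _ _ _
    _ ≤ exp (π * s) ^ 2 :=
        pow_le_pow_left₀ (prod_nonneg fun b _ => by positivity)
          (prod_one_add_sq_div_sq_le_exp hs _) 2
    _ = exp (2 * π * s) := by rw [← exp_nat_mul]; ring_nf

section SqrtGap

variable {γ : ℝ} {lam : ℕ → ℝ}

lemma sq_le_sub_of_le_sqrt_sub_sqrt {x y c : ℝ} (hx : 0 ≤ x) (hy : 0 ≤ y) (hc : 0 ≤ c)
    (h : c ≤ √y - √x) : c ^ 2 ≤ y - x := by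
  have hsum : √y - √x ≤ √y + √x := by linarith [Real.sqrt_nonneg x]
  calc c ^ 2 ≤ (√y - √x) * (√y + √x) := by nlinarith
    _ = y - x := by ring_nf; rw [sq_sqrt hx, sq_sqrt hy]

lemma mul_sub_le_sqrt_sub_sqrt (hgap : ∀ n, 1 ≤ n → γ ≤ √(lam (n + 1)) - √(lam n))
    {a b : ℕ} (ha : 1 ≤ a) (hab : a ≤ b) : γ * ((b : ℝ) - a) ≤ √(lam b) - √(lam a) := by
  induction b, hab using Nat.le_induction with
  | base => simp
  | succ b hab ih =>
    have := hgap b (ha.trans hab)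
    push_cast
    linarith

lemma sq_mul_sq_sub_le_abs_sub (hγ : 0 ≤ γ) (hlam : ∀ n, 1 ≤ n → 0 ≤ lam n)
    (hgap : ∀ n, 1 ≤ n → γ ≤ √(lam (n + 1)) - √(lam n))
    {k m : ℕ} (hk : 1 ≤ k) (hm : 1 ≤ m) : γ ^ 2 * ((k : ℝ) - m) ^ 2 ≤ |lam k - lam m| := by
  wlog hkm : m ≤ k generalizing k m
  · rw [abs_sub_comm, ← neg_sub (m : ℝ), neg_sq]
    exact this hm hk (by omega)
  have hsq := sq_le_sub_of_le_sqrt_sub_sqrt (hlam m hm) (hlam k hk)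
    (mul_nonneg hγ (sub_nonneg.2 (Nat.cast_le.2 hkm))) (mul_sub_le_sqrt_sub_sqrt hgap hm hkm)
  rw [mul_pow] at hsq
  exact hsq.trans (le_abs_self _)

lemma norm_div_sub_le (hγ : 0 < γ) (hlam : ∀ n, 1 ≤ n → 0 ≤ lam n)
    (hgap : ∀ n, 1 ≤ n → γ ≤ √(lam (n + 1)) - √(lam n))
    {k m : ℕ} (hk : 1 ≤ k) (hm : 1 ≤ m) (w : ℂ) :
    ‖w / (lam k - lam m : ℂ)‖ ≤ ‖w‖ / γ ^ 2 / ((k : ℝ) - m) ^ 2 := by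
  rcases eq_or_ne k m with rfl | hkm
  · simp
  have hne : (k : ℝ) - m ≠ 0 := sub_ne_zero.2 (Nat.cast_injective.ne hkm)
  have hpos : 0 < γ ^ 2 * ((k : ℝ) - m) ^ 2 := by positivity
  rw [norm_div, div_div, ← Complex.ofReal_sub, Complex.norm_real, Real.norm_eq_abs]
  exact div_le_div_of_nonneg_left (norm_nonneg w) hpos
    (sq_mul_sq_sub_le_abs_sub hγ.le hlam hgap hk hm)

end SqrtGap

lemma Real.sqrt_add_le_add_sqrt {x y : ℝ} (hx : 0 ≤ x) (hy : 0 ≤ y) : √(x + y) ≤ √x + √y := by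
  rw [Real.sqrt_le_left (by positivity)]
  nlinarith [sq_sqrt hx, sq_sqrt hy, Real.sqrt_nonneg x, Real.sqrt_nonneg y]

lemma norm_one_sub_sq_le {R : Type*} [NormedRing R] [NormOneClass R] (a : R) :
    ‖1 - a ^ 2‖ ≤ (1 + ‖a‖) ^ 2 :=
  calc ‖1 - a ^ 2‖ ≤ 1 + ‖a‖ ^ 2 :=
        (norm_sub_le _ _).trans (by rw [norm_one]; gcongr; exact norm_pow_le a 2)
    _ ≤ (1 + ‖a‖) ^ 2 := by nlinarith [norm_nonneg a]

lemma norm_I_mul_sub_ofReal_le (z : ℂ) {x : ℝ} (hx : 0 ≤ x) : ‖I * z - x‖ ≤ ‖z‖ + x := by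
  simpa [abs_of_nonneg hx] using norm_sub_le (I * z) x

/-- The `k`-th factor of `F_m`; since `x / 0 = 0`, the factor with `k = m` is `1`. -/
noncomputable def lagrangeFactor (lam : ℕ → ℝ) (m k : ℕ) (z : ℂ) : ℂ :=
  1 - ((I * z - lam m) / (lam k - lam m)) ^ 2

noncomputable def lagrangeProduct (lam : ℕ → ℝ) (m : ℕ) (z : ℂ) : ℂ :=
  ∏' k, lagrangeFactor lam m (k + 1) z

section LagrangeProduct

variable {γ : ℝ} {lam : ℕ → ℝ} {m : ℕ}

lemma lagrangeFactor_self (z : ℂ) : lagrangeFactor lam m m z = 1 := by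
  simp [lagrangeFactor]

lemma prod_erase_Icc_lagrangeFactor (K : ℕ) (z : ℂ) :
    ∏ k ∈ (Icc 1 K).erase m, lagrangeFactor lam m k z
      = ∏ k ∈ range K, lagrangeFactor lam m (k + 1) z := by
  rw [prod_erase (f := (lagrangeFactor lam m · z)) _ (lagrangeFactor_self z),
    ← Ico_add_one_right_eq_Icc, prod_Ico_eq_prod_range]
  simp [add_comm]

lemma lagrangeProduct_apply_self : lagrangeProduct lam m (-I * lam m) = 1 := by
  simp [lagrangeProduct, lagrangeFactor, ← mul_assoc]

variable (hγ : 0 < γ) (hlam : ∀ n, 1 ≤ n → 0 ≤ lam n)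
    (hgap : ∀ n, 1 ≤ n → γ ≤ √(lam (n + 1)) - √(lam n)) (hm : 1 ≤ m)
include hγ hlam hgap hm

lemma norm_lagrangeFactor_le {k : ℕ} (hk : 1 ≤ k) (z : ℂ) :
    ‖lagrangeFactor lam m k z‖ ≤ (1 + ‖I * z - lam m‖ / γ ^ 2 / ((k : ℝ) - m) ^ 2) ^ 2 :=
  (norm_one_sub_sq_le _).trans <| pow_le_pow_left₀ (by positivity)
    (add_le_add_right (norm_div_sub_le hγ hlam hgap hk hm _) 1) 2

lemma norm_prod_range_lagrangeFactor_le (K : ℕ) (z : ℂ) :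
    ‖∏ k ∈ range K, lagrangeFactor lam m (k + 1) z‖
      ≤ exp (4 * π * (√‖I * z - lam m‖ / γ)) := by
  set s := √‖I * z - lam m‖ / γ
  have hs : ‖I * z - lam m‖ / γ ^ 2 = s ^ 2 := by rw [div_pow, sq_sqrt (norm_nonneg _)]
  have hinj : Set.InjOn (fun k : ℕ => ((k + 1 : ℕ) : ℤ) - m) (range K) := fun a _ b _ h => by
    simpa using h
  calc ‖∏ k ∈ range K, lagrangeFactor lam m (k + 1) z‖
      ≤ ∏ k ∈ range K, (1 + s ^ 2 / (((k + 1 : ℕ) : ℝ) - m) ^ 2) ^ 2 := by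
        rw [norm_prod]
        exact prod_le_prod (fun _ _ => norm_nonneg _) fun k _ =>
          hs ▸ norm_lagrangeFactor_le hγ hlam hgap hm (by omega) z
    _ = (∏ j ∈ (range K).image (fun k : ℕ => ((k + 1 : ℕ) : ℤ) - m),
          (1 + s ^ 2 / (j : ℝ) ^ 2)) ^ 2 := by
        rw [prod_image hinj, prod_pow]
        push_cast
        rfl
    _ ≤ exp (2 * π * s) ^ 2 :=
        pow_le_pow_left₀ (prod_nonneg fun _ _ => by positivity)
          (prod_int_one_add_sq_div_sq_le_exp (by positivity) _) 2
    _ = exp (4 * π * s) := by rw [← exp_nat_mul]; ring_nf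

lemma hasProdLocallyUniformlyOn_lagrangeFactor :
    HasProdLocallyUniformlyOn (fun k => lagrangeFactor lam m (k + 1)) (lagrangeProduct lam m)
      Set.univ := by
  refine hasProdLocallyUniformlyOn_of_forall_compact isOpen_univ fun K _ hK => ?_
  obtain ⟨R, hR⟩ := hK.isBounded.subset_closedBall 0
  set u : ℕ → ℝ := fun n => ((R + lam m) / γ ^ 2) ^ 2 * (1 / |(n : ℝ) + (1 - m)| ^ (4 : ℝ))
  have hu : Summable u :=
    ((Real.summable_one_div_nat_add_rpow _ _).2 (by norm_num)).mul_left _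
  have hbound : ∀ n, ∀ z ∈ K, ‖-((I * z - lam m) / (lam (n + 1) - lam m)) ^ 2‖ ≤ u n := by
    intro n z hz
    have hw : ‖I * z - lam m‖ ≤ R + lam m :=
      (norm_I_mul_sub_ofReal_le z (hlam m hm)).trans (by gcongr; simpa using hR hz)
    calc ‖-((I * z - lam m) / (lam (n + 1) - lam m)) ^ 2‖
        = ‖(I * z - lam m) / (lam (n + 1) - lam m)‖ ^ 2 := by rw [norm_neg, norm_pow]
      _ ≤ ((R + lam m) / γ ^ 2 / (((n + 1 : ℕ) : ℝ) - m) ^ 2) ^ 2 := by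
        gcongr
        exact (norm_div_sub_le hγ hlam hgap (by omega) hm _).trans (by gcongr)
      _ = u n := by
        simp only [u, Real.rpow_ofNat, show 4 = 2 * 2 from rfl, pow_mul, sq_abs]
        rw [div_pow _ (_ ^ 2), div_eq_mul_one_div]
        push_cast
        ring_nf
  convert Summable.hasProdUniformlyOn_nat_one_add hK hu (.of_forall hbound)
    (fun n => by fun_prop) using 1
  · funext k z
    simp only [lagrangeFactor, sub_eq_add_neg]
  · funext z
    simp only [lagrangeProduct, lagrangeFactor, sub_eq_add_neg]

lemma lagrangeProduct_apply_of_ne {n : ℕ} (hn : 1 ≤ n) (hmn : m ≠ n) :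
    lagrangeProduct lam m (-I * lam n) = 0 := by
  refine (hasProd_zero_of_exists_eq_zero ⟨n - 1, ?_⟩).tprod_eq
  have hne : (n : ℝ) - m ≠ 0 := sub_ne_zero.2 (Nat.cast_injective.ne hmn.symm)
  have hgap_nm := sq_mul_sq_sub_le_abs_sub hγ.le hlam hgap hn hm
  have hlam_ne : (lam n : ℂ) - lam m ≠ 0 := by
    rw [← Complex.ofReal_sub, Complex.ofReal_ne_zero, ← abs_pos]
    exact lt_of_lt_of_le (by positivity) hgap_nm
  rw [Nat.sub_add_cancel hn, lagrangeFactor, show I * (-I * lam n) = lam n by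
    rw [← mul_assoc, mul_neg, Complex.I_mul_I, neg_neg, one_mul], div_self hlam_ne]
  ring

lemma norm_lagrangeProduct_le (z : ℂ) :
    ‖lagrangeProduct lam m z‖ ≤ exp (4 * π / γ * √(lam m)) * exp (4 * π / γ * √‖z‖) := by
  have hlim := (hasProdLocallyUniformlyOn_lagrangeFactor hγ hlam hgap hm
    ).tendstoLocallyUniformlyOn_finsetRange.tendsto_at (Set.mem_univ z)
  refine le_of_tendsto hlim.norm (.of_forall fun K =>
    (norm_prod_range_lagrangeFactor_le hγ hlam hgap hm K z).trans ?_)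
  have hsqrt : √‖I * z - lam m‖ ≤ √(lam m) + √‖z‖ :=
    calc √‖I * z - lam m‖ ≤ √(‖z‖ + lam m) :=
          Real.sqrt_le_sqrt (norm_I_mul_sub_ofReal_le z (hlam m hm))
      _ ≤ √(lam m) + √‖z‖ := by
          rw [add_comm (√(lam m))]
          exact Real.sqrt_add_le_add_sqrt (norm_nonneg z) (hlam m hm)
  rw [← exp_add]
  gcongr exp ?_
  calc 4 * π * (√‖I * z - lam m‖ / γ) = 4 * π / γ * √‖I * z - lam m‖ := by ring
    _ ≤ 4 * π / γ * (√(lam m) + √‖z‖) := by gcongr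
    _ = _ := by ring

end LagrangeProduct

theorem weierstrass_product_growth_one_gap :
    ∃ Cu > (0:ℝ),
      ∀ γ : ℝ, 0 < γ → ∀ lam : ℕ → ℝ,
        (∀ n, 1 ≤ n → 0 ≤ lam n) →
        (∀ n, 1 ≤ n → γ ≤ Real.sqrt (lam (n + 1)) - Real.sqrt (lam n)) →
        ∃ F : ℕ → ℂ → ℂ,
          ∀ m, 1 ≤ m →
            TendstoLocallyUniformly
              (fun (K : ℕ) (z : ℂ) =>
                ∏ k ∈ (Finset.Icc 1 K).erase m,
                  (1 - ((Complex.I * z - (lam m : ℂ)) /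
                    ((lam k : ℂ) - (lam m : ℂ))) ^ 2))
              (F m) Filter.atTop ∧
            Differentiable ℂ (F m) ∧
            (∀ n, 1 ≤ n →
              F m (-Complex.I * (lam n : ℂ)) = if m = n then 1 else 0) ∧
            (∀ z : ℂ, ‖F m z‖ ≤
              Real.exp (Cu / γ * Real.sqrt (lam m)) *
                Real.exp (Cu / γ * Real.sqrt ‖z‖)) := by
  refine ⟨4 * π, by positivity, fun γ hγ lam hlam hgap => ⟨lagrangeProduct lam, fun m hm => ?_⟩⟩
  have hrange := (hasProdLocallyUniformlyOn_lagrangeFactor hγ hlam hgap hm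
    ).tendstoLocallyUniformlyOn_finsetRange
  refine ⟨?_, ?_, fun n hn => ?_, norm_lagrangeProduct_le hγ hlam hgap hm⟩
  · show TendstoLocallyUniformly
      (fun K z => ∏ k ∈ (Icc 1 K).erase m, lagrangeFactor lam m k z) _ _
    simp_rw [prod_erase_Icc_lagrangeFactor]
    exact tendstoLocallyUniformlyOn_univ.1 hrange
  · refine differentiableOn_univ.1 (hrange.differentiableOn (.of_forall fun K => ?_) isOpen_univ)
    unfold lagrangeFactor
    fun_prop
  · split_ifs with hmn
    · exact hmn ▸ lagrangeProduct_apply_self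
    · exact lagrangeProduct_apply_of_ne hγ hlam hgap hm hn hmn
end

section
/- For every real T' > 0 and every integer N' ≥ 1, the infinite product defining P_{N',T'} converges locally uniformly on ℂ, so P_{N',T'} is an entire function, and it satisfies: P_{N',T'}(0) = 1; |P_{N',T'}(z)| ≤ 1 for every z ∈ ℂ with Im z ≥ 0; and |e^{−izT'/2} P_{N',T'}(z)| ≤ e^{|z| T'/2} for every z ∈ ℂ. -/
/-- `C_{N',T'} = T' / (2 Σ_{k=N'}^∞ 1/k²)`. -/
noncomputable def CNT (N' : ℕ) (T' : ℝ) : ℝ :=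
  T' / (2 * ∑' j : ℕ, 1 / ((j + N' : ℕ) : ℝ) ^ 2)

/-- The mollifier `P_{N',T'}(z) = e^{izT'/2} ∏_{k=N'}^∞ cos (a_k z)` with
`a_k = C_{N',T'}/k²`. -/
noncomputable def PNT (N' : ℕ) (T' : ℝ) (z : ℂ) : ℂ :=
  Complex.exp (Complex.I * z * (T' / 2)) *
    ∏' j : ℕ, Complex.cos ((CNT N' T' / ((j + N' : ℕ) : ℝ) ^ 2 : ℝ) * z)

/-!
Each factor satisfies `‖cos w‖ ≤ exp |Im w|` and `‖cos w - 1‖ ≤ ‖w‖ exp ‖w‖`. The constant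
`C_{N',T'}` is chosen so that `∑ a_k = T'/2`. The second bound makes the product converge locally
uniformly, so `P_{N',T'}` is entire; the first gives `‖∏ cos (a_k z)‖ ≤ exp (|Im z| T'/2)`, which
the factor `e^{izT'/2}`, of modulus `exp (-Im z T'/2)`, cancels in the upper half-plane.
-/

open Complex Filter Set

lemma tendstoLocallyUniformly_const {ι α β : Type*} [TopologicalSpace α] [UniformSpace β]
    (l : Filter ι) (f : α → β) : TendstoLocallyUniformly (fun (_ : ι) => f) f l :=
  fun _ hu _ => ⟨univ, univ_mem, Eventually.of_forall fun _ _ _ => refl_mem_uniformity hu⟩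

lemma norm_cexp_sub_one_le (w : ℂ) : ‖exp w - 1‖ ≤ ‖w‖ * Real.exp ‖w‖ := by
  simpa using norm_exp_sub_sum_le_norm_mul_exp w 1

lemma norm_cos_sub_one_le (w : ℂ) : ‖cos w - 1‖ ≤ ‖w‖ * Real.exp ‖w‖ := by
  have h : cos w - 1 = ((exp (w * I) - 1) + (exp (-w * I) - 1)) / 2 := by rw [cos]; ring
  have h₁ := norm_cexp_sub_one_le (w * I)
  have h₂ := norm_cexp_sub_one_le (-w * I)
  simp only [norm_mul, norm_neg, norm_I, mul_one] at h₁ h₂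
  rw [h, norm_div, RCLike.norm_ofNat]
  linarith [norm_add_le (exp (w * I) - 1) (exp (-w * I) - 1)]

lemma norm_cos_le_exp_abs_im (w : ℂ) : ‖cos w‖ ≤ Real.exp |w.im| := by
  have h₁ : ‖exp (w * I)‖ ≤ Real.exp |w.im| := by
    rw [norm_exp]; gcongr; simpa using neg_le_abs w.im
  have h₂ : ‖exp (-w * I)‖ ≤ Real.exp |w.im| := by
    rw [norm_exp]; gcongr; simpa using le_abs_self w.im
  rw [cos, norm_div, RCLike.norm_ofNat]
  linarith [norm_add_le (exp (w * I)) (exp (-w * I))]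

lemma norm_tprod_le_exp_tsum {ι R : Type*} [NormedCommRing R] [NormOneClass R] {f : ι → R}
    {b : ι → ℝ} (hb : Summable b) (hb₀ : 0 ≤ b) (hfb : ∀ i, ‖f i‖ ≤ Real.exp (b i)) :
    ‖∏' i, f i‖ ≤ Real.exp (∑' i, b i) := by
  by_cases hf : Multipliable f
  · refine le_of_tendsto' ((continuous_norm.tendsto _).comp hf.hasProd) fun s => ?_
    calc ‖∏ i ∈ s, f i‖ ≤ ∏ i ∈ s, ‖f i‖ := Finset.norm_prod_le s f
      _ ≤ ∏ i ∈ s, Real.exp (b i) := Finset.prod_le_prod (fun _ _ => norm_nonneg _) fun i _ => hfb i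
      _ = Real.exp (∑ i ∈ s, b i) := (Real.exp_sum s b).symm
      _ ≤ Real.exp (∑' i, b i) := Real.exp_le_exp.2 (hb.sum_le_tsum s fun i _ => hb₀ i)
  · rw [tprod_eq_one_of_not_multipliable hf, norm_one]
    exact Real.one_le_exp (tsum_nonneg hb₀)

lemma norm_tprod_cos_mul_le {ι : Type*} {a : ι → ℝ} (ha : Summable a) (ha₀ : 0 ≤ a) (z : ℂ) :
    ‖∏' i, cos (a i * z)‖ ≤ Real.exp (|z.im| * ∑' i, a i) := by
  rw [← tsum_mul_left]
  refine norm_tprod_le_exp_tsum (ha.mul_left _) (fun i => mul_nonneg (abs_nonneg _) (ha₀ i))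
    fun i => (norm_cos_le_exp_abs_im _).trans_eq ?_
  rw [im_ofReal_mul, abs_mul, abs_of_nonneg (ha₀ i), mul_comm]

lemma hasProdLocallyUniformlyOn_cos_mul {ι : Type*} {a : ι → ℂ} (ha : Summable fun i => ‖a i‖) :
    HasProdLocallyUniformlyOn (fun i z => cos (a i * z)) (fun z => ∏' i, cos (a i * z)) univ := by
  refine hasProdLocallyUniformlyOn_of_forall_compact isOpen_univ fun K _ hK => ?_
  obtain ⟨R, hKR⟩ := hK.isBounded.subset_closedBall 0
  have hbound : ∀ᶠ i in cofinite, ∀ z ∈ K, ‖cos (a i * z) - 1‖ ≤ ‖a i‖ * (R * Real.exp R) := by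
    filter_upwards [ha.tendsto_cofinite_zero.eventually_le_const one_pos] with i hi z hz
    have hzR : ‖z‖ ≤ R := by simpa using hKR hz
    have hR : 0 ≤ R := (norm_nonneg z).trans hzR
    have haz : ‖a i * z‖ ≤ ‖a i‖ * R := by rw [norm_mul]; gcongr
    calc ‖cos (a i * z) - 1‖ ≤ ‖a i * z‖ * Real.exp ‖a i * z‖ := norm_cos_sub_one_le _
      _ ≤ ‖a i‖ * R * Real.exp R := by
          gcongr
          nlinarith [norm_nonneg (a i)]
      _ = _ := by ring
  simpa using Summable.hasProdUniformlyOn_one_add hK (ha.mul_right _) hbound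
    fun i => by fun_prop

lemma summable_one_div_nat_add_sq (N : ℕ) :
    Summable fun j : ℕ => 1 / ((j + N : ℕ) : ℝ) ^ 2 :=
  (summable_nat_add_iff N).2 (Real.summable_one_div_nat_pow.2 one_lt_two)

lemma tsum_one_div_nat_add_sq_pos (N : ℕ) : 0 < ∑' j : ℕ, 1 / ((j + N : ℕ) : ℝ) ^ 2 :=
  (summable_one_div_nat_add_sq N).tsum_pos (fun _ => by positivity) 1 (by positivity)

lemma CNT_nonneg (N : ℕ) {T : ℝ} (hT : 0 ≤ T) : 0 ≤ CNT N T :=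
  div_nonneg hT (mul_nonneg zero_le_two (tsum_one_div_nat_add_sq_pos N).le)

lemma summable_CNT_div_sq (N : ℕ) (T : ℝ) :
    Summable fun j : ℕ => CNT N T / ((j + N : ℕ) : ℝ) ^ 2 := by
  simpa only [mul_one_div] using (summable_one_div_nat_add_sq N).mul_left (CNT N T)

lemma tsum_CNT_div_sq (N : ℕ) (T : ℝ) : ∑' j : ℕ, CNT N T / ((j + N : ℕ) : ℝ) ^ 2 = T / 2 := by
  have hS := (tsum_one_div_nat_add_sq_pos N).ne'
  calc ∑' j : ℕ, CNT N T / ((j + N : ℕ) : ℝ) ^ 2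
      = CNT N T * ∑' j : ℕ, 1 / ((j + N : ℕ) : ℝ) ^ 2 := by
        rw [← tsum_mul_left]; simp only [mul_one_div]
    _ = T / 2 := by rw [CNT]; field_simp

theorem mollifier_basic_properties_general (T' : ℝ) (hT' : 0 < T') (N' : ℕ) :
    TendstoLocallyUniformly
      (fun (K : ℕ) (z : ℂ) =>
        Complex.exp (Complex.I * z * (T' / 2)) *
          ∏ j ∈ Finset.range K,
            Complex.cos ((CNT N' T' / ((j + N' : ℕ) : ℝ) ^ 2 : ℝ) * z))
      (PNT N' T') Filter.atTop ∧
    Differentiable ℂ (PNT N' T') ∧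
    PNT N' T' 0 = 1 ∧
    (∀ z : ℂ, 0 ≤ z.im → ‖PNT N' T' z‖ ≤ 1) ∧
    (∀ z : ℂ, ‖Complex.exp (-Complex.I * z * (T' / 2)) * PNT N' T' z‖ ≤
      Real.exp (‖z‖ * (T' / 2))) := by
  set a : ℕ → ℝ := fun j => CNT N' T' / ((j + N' : ℕ) : ℝ) ^ 2
  have ha₀ : 0 ≤ a := fun j => div_nonneg (CNT_nonneg N' hT'.le) (sq_nonneg _)
  have hprod : TendstoLocallyUniformly (fun K z => ∏ j ∈ Finset.range K, cos (a j * z))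
      (fun z => ∏' j, cos (a j * z)) atTop := by
    rw [← tendstoLocallyUniformlyOn_univ]
    refine (hasProdLocallyUniformlyOn_cos_mul ?_).tendstoLocallyUniformlyOn_finsetRange
    simpa only [norm_real] using (summable_CNT_div_sq N' T').norm
  have hdiff : Differentiable ℂ fun z => ∏' j, cos (a j * z) := by
    rw [← differentiableOn_univ]
    exact (tendstoLocallyUniformlyOn_univ.2 hprod).differentiableOn
      (Eventually.of_forall fun K => by fun_prop) isOpen_univ
  have hnorm : ∀ z, ‖∏' j, cos (a j * z)‖ ≤ Real.exp (|z.im| * (T' / 2)) := fun z => by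
    simpa only [a, tsum_CNT_div_sq] using norm_tprod_cos_mul_le (summable_CNT_div_sq N' T') ha₀ z
  have hexp : ∀ z : ℂ, ‖exp (I * z * (T' / 2))‖ = Real.exp (-(z.im * (T' / 2))) := fun z => by
    rw [norm_exp]; congr 1; simp [mul_re]
  refine ⟨(tendstoLocallyUniformly_const atTop _).mul₀ hprod (by fun_prop) hdiff.continuous,
    (by fun_prop : Differentiable ℂ fun z => exp (I * z * (T' / 2))).mul hdiff,
    by simp [PNT], fun z hz => ?_, fun z => ?_⟩
  · calc ‖PNT N' T' z‖ ≤ Real.exp (-(z.im * (T' / 2))) * Real.exp (|z.im| * (T' / 2)) := by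
          rw [PNT, norm_mul, hexp]; gcongr; exact hnorm z
      _ = 1 := by rw [abs_of_nonneg hz, ← Real.exp_add, neg_add_cancel, Real.exp_zero]
  · have hcancel : exp (-I * z * (T' / 2)) * PNT N' T' z = ∏' j, cos (a j * z) := by
      rw [PNT, ← mul_assoc, ← exp_add, neg_mul, neg_mul, neg_add_cancel, exp_zero, one_mul]
    rw [hcancel]
    refine (hnorm z).trans (Real.exp_le_exp.2 ?_)
    gcongr
    exact abs_im_le_norm z

theorem mollifier_basic_properties (T' : ℝ) (hT' : 0 < T') (N' : ℕ) (hN' : 1 ≤ N') :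
    TendstoLocallyUniformly
      (fun (K : ℕ) (z : ℂ) =>
        Complex.exp (Complex.I * z * (T' / 2)) *
          ∏ j ∈ Finset.range K,
            Complex.cos ((CNT N' T' / ((j + N' : ℕ) : ℝ) ^ 2 : ℝ) * z))
      (PNT N' T') Filter.atTop ∧
    Differentiable ℂ (PNT N' T') ∧
    PNT N' T' 0 = 1 ∧
    (∀ z : ℂ, 0 ≤ z.im → ‖PNT N' T' z‖ ≤ 1) ∧
    (∀ z : ℂ, ‖Complex.exp (-Complex.I * z * (T' / 2)) * PNT N' T' z‖ ≤
      Real.exp (‖z‖ * (T' / 2))) :=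
  mollifier_basic_properties_general T' hT' N'
end

section
/- Let M ≥ 0 be an integer and let 0 < λ_1 < λ_2 < ⋯ < λ_{M+1} be real numbers. Define A_k := 1 / ∏_{i=1, i≠k}^{M+1} (λ_i − λ_k) for k = 1, …, M+1, and q(s) := Σ_{i=1}^{M+1} A_i e^{−λ_i s} for s ∈ ℝ. Then q^{(j)}(0) = 0 for every 0 ≤ j ≤ M−1, q^{(M)}(0) = 1, and for every s > 0 one has 0 < q(s) ≤ (s^M / M!) e^{−λ_1 s}. -/
/-!
Write `q_s(t) = ∑_{i ∈ s} e^{-λ_i t} / ∏_{k ∈ s, k ≠ i} (λ_k - λ_i)`. Its derivatives at `0` are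
the sums `∑_i (-λ_i)^j / ∏_{k ≠ i} (λ_k - λ_i)`, i.e. the coefficients of `X^{#s-1}` in the
Lagrange interpolants of `X^j`: they vanish for `j < #s - 1` and equal `1` for `j = #s - 1`.
Adding a node `a` to `s` convolves with an exponential,
`q_{s ∪ {a}}(t) = ∫₀ᵗ e^{-λ_a (t-u)} q_s(u) du`, so by induction from `q_{a}(t) = e^{-λ_a t}`,
`q_s > 0` on `(0, ∞)`, and bounding every `e^{-λ_a (t-u)}` by `e^{-m (t-u)}` for `m ≤ min λ`
gives `q_s(t) ≤ t^{#s-1} / (#s-1)! · e^{-m t}`.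
-/

open Finset Real

open Polynomial in
theorem sum_pow_div_prod_sub {F ι : Type*} [Field F] [DecidableEq ι] {s : Finset ι} {v : ι → F}
    (hvs : Set.InjOn v s) {j : ℕ} (hj : j < #s) :
    ∑ i ∈ s, v i ^ j / ∏ k ∈ s.erase i, (v i - v k) = if j = #s - 1 then 1 else 0 := by
  have h := Lagrange.coeff_eq_sum (P := X ^ j) hvs (by rw [degree_X_pow]; exact_mod_cast hj)
  simp only [eval_pow, eval_X, coeff_X_pow] at h
  rw [← h]
  exact if_congr eq_comm rfl rfl

theorem integral_exp_mul_sub_mul_exp {b c : ℝ} (hbc : b ≠ c) (t : ℝ) :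
    ∫ u in (0 : ℝ)..t, exp (-b * (t - u)) * exp (-c * u) =
      (exp (-c * t) - exp (-b * t)) / (b - c) := by
  have hsub : b - c ≠ 0 := sub_ne_zero.mpr hbc
  have hsplit : ∀ u, exp (-b * (t - u)) * exp (-c * u) = exp (-b * t) * exp ((b - c) * u) := by
    intro u
    rw [← exp_add, ← exp_add]
    ring_nf
  simp_rw [hsplit, intervalIntegral.integral_const_mul,
    intervalIntegral.integral_comp_mul_left (fun u => exp u) hsub, integral_exp, smul_eq_mul,
    mul_zero, exp_zero]
  rw [show -c * t = -b * t + (b - c) * t by ring, exp_add]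
  field_simp

section ExpDivDiff

variable {ι : Type*} [DecidableEq ι] (lam : ι → ℝ)

/-- `(-1)^(#s - 1)` times the divided difference of `x ↦ exp (-x * t)` at the nodes `lam i`. -/
noncomputable def expDivDiff (s : Finset ι) (t : ℝ) : ℝ :=
  ∑ i ∈ s, (1 / ∏ k ∈ s.erase i, (lam k - lam i)) * exp (-lam i * t)

@[fun_prop]
theorem continuous_expDivDiff (s : Finset ι) : Continuous (expDivDiff lam s) := by
  unfold expDivDiff
  fun_prop

@[simp]
theorem expDivDiff_singleton (a : ι) (t : ℝ) : expDivDiff lam {a} t = exp (-lam a * t) := by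
  simp [expDivDiff]

theorem iteratedDeriv_expDivDiff_zero {s : Finset ι} (hinj : Set.InjOn lam s) {j : ℕ}
    (hj : j < #s) :
    iteratedDeriv j (expDivDiff lam s) 0 = if j = #s - 1 then 1 else 0 := by
  have hnodes : ∀ i ∈ s, ∏ k ∈ s.erase i, (-lam i - -lam k) = ∏ k ∈ s.erase i, (lam k - lam i) :=
    fun i _ => prod_congr rfl fun k _ => neg_sub_neg _ _
  rw [← sum_pow_div_prod_sub (v := fun i => -lam i) (neg_injective.comp_injOn hinj) hj,
    sum_congr rfl fun i hi => by rw [hnodes i hi]]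
  unfold expDivDiff
  rw [iteratedDeriv_fun_sum fun i _ => by fun_prop]
  refine sum_congr rfl fun i _ => ?_
  rw [iteratedDeriv_const_mul_field, iteratedDeriv_exp_const_mul]
  simp only [mul_zero, exp_zero, mul_one]
  ring

theorem one_div_prod_erase_insert {s : Finset ι} {a i : ι} (ha : a ∉ s) (hi : i ∈ s) :
    1 / ∏ k ∈ (insert a s).erase i, (lam k - lam i) =
      (1 / ∏ k ∈ s.erase i, (lam k - lam i)) / (lam a - lam i) := by
  rw [erase_insert_of_ne (ne_of_mem_of_not_mem hi ha).symm,
    prod_insert fun h => ha (mem_of_mem_erase h), div_div, mul_comm]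

theorem expDivDiff_insert {s : Finset ι} {a : ι} (ha : a ∉ s) (hs : s.Nonempty)
    (hinj : Set.InjOn lam ↑(insert a s)) (t : ℝ) :
    expDivDiff lam (insert a s) t =
      ∫ u in (0 : ℝ)..t, exp (-lam a * (t - u)) * expDivDiff lam s u := by
  have hne : ∀ i ∈ s, lam a ≠ lam i := fun i hi h =>
    ne_of_mem_of_not_mem hi ha (hinj (mem_insert_of_mem hi) (mem_insert_self a s) h.symm)
  have hcard : #(insert a s) = #s + 1 := card_insert_of_notMem ha
  -- the coefficients of `q_{s ∪ {a}}` sum to `q_{s ∪ {a}}(0) = 0`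
  have hsum : ∑ i ∈ insert a s, 1 / ∏ k ∈ (insert a s).erase i, (lam k - lam i) = 0 := by
    have h := iteratedDeriv_expDivDiff_zero lam hinj (j := 0) (by omega)
    simp only [iteratedDeriv_zero, expDivDiff, mul_zero, exp_zero, mul_one] at h
    rw [h, if_neg (by rw [hcard]; exact (card_pos.mpr hs).ne)]
  rw [sum_insert ha, add_comm] at hsum
  calc expDivDiff lam (insert a s) t
      = ∑ i ∈ s, (1 / ∏ k ∈ (insert a s).erase i, (lam k - lam i)) *
          (exp (-lam i * t) - exp (-lam a * t)) := by
        rw [expDivDiff, sum_insert ha, eq_neg_of_add_eq_zero_right hsum]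
        simp only [mul_sub, sum_sub_distrib, neg_mul, sum_mul]
        ring
    _ = ∑ i ∈ s, (1 / ∏ k ∈ s.erase i, (lam k - lam i)) *
          ∫ u in (0 : ℝ)..t, exp (-lam a * (t - u)) * exp (-lam i * u) := by
        refine sum_congr rfl fun i hi => ?_
        rw [one_div_prod_erase_insert lam ha hi, integral_exp_mul_sub_mul_exp (hne i hi)]
        ring
    _ = ∫ u in (0 : ℝ)..t, exp (-lam a * (t - u)) * expDivDiff lam s u := by
        simp only [expDivDiff, mul_sum]
        rw [intervalIntegral.integral_finsetSum fun i _ => by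
          apply Continuous.intervalIntegrable; fun_prop]
        refine sum_congr rfl fun i _ => ?_
        rw [← intervalIntegral.integral_const_mul]
        congr 1 with u
        ring

theorem expDivDiff_pos {N : ℕ} {s : Finset ι} (hinj : Set.InjOn lam s) (hcard : #s = N + 1)
    {t : ℝ} (ht : 0 < t) : 0 < expDivDiff lam s t := by
  induction N generalizing s t with
  | zero =>
    obtain ⟨a, rfl⟩ := card_eq_one.mp hcard
    simpa using exp_pos _
  | succ N ih =>
    obtain ⟨a, s, ha, rfl, hcard'⟩ := card_eq_succ.mp hcard
    have hs : s.Nonempty := card_pos.mp (by omega)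
    rw [expDivDiff_insert lam ha hs hinj]
    refine intervalIntegral.intervalIntegral_pos_of_pos_on ?_ (fun u hu => ?_) ht
    · apply Continuous.intervalIntegrable
      fun_prop
    · exact mul_pos (exp_pos _) (ih (hinj.mono (subset_insert a s)) hcard' hu.1)

theorem expDivDiff_le {N : ℕ} {s : Finset ι} (hinj : Set.InjOn lam s) (hcard : #s = N + 1)
    {m : ℝ} (hm : ∀ i ∈ s, m ≤ lam i) {t : ℝ} (ht : 0 < t) :
    expDivDiff lam s t ≤ t ^ N / N.factorial * exp (-m * t) := by
  induction N generalizing s t with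
  | zero =>
    obtain ⟨a, rfl⟩ := card_eq_one.mp hcard
    simpa using exp_le_exp.mpr (by nlinarith [hm a (mem_singleton_self a)])
  | succ N ih =>
    obtain ⟨a, s, ha, rfl, hcard'⟩ := card_eq_succ.mp hcard
    have hs : s.Nonempty := card_pos.mp (by omega)
    have hinj' : Set.InjOn lam s := hinj.mono (subset_insert a s)
    have hm' : ∀ i ∈ s, m ≤ lam i := fun i hi => hm i (mem_insert_of_mem hi)
    have hpointwise : ∀ u ∈ Set.Ioo 0 t, exp (-lam a * (t - u)) * expDivDiff lam s u ≤
        exp (-m * t) * (u ^ N / N.factorial) := by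
      intro u hu
      calc exp (-lam a * (t - u)) * expDivDiff lam s u
          ≤ exp (-m * (t - u)) * (u ^ N / N.factorial * exp (-m * u)) := by
            refine mul_le_mul (exp_le_exp.mpr ?_) (ih hinj' hcard' hm' hu.1)
              (expDivDiff_pos lam hinj' hcard' hu.1).le (exp_pos _).le
            nlinarith [hm a (mem_insert_self a s), hu.2]
        _ = exp (-m * t) * (u ^ N / N.factorial) := by
            rw [show -m * t = -m * (t - u) + -m * u by ring, exp_add]
            ring
    rw [expDivDiff_insert lam ha hs hinj]
    calc ∫ u in (0 : ℝ)..t, exp (-lam a * (t - u)) * expDivDiff lam s u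
        ≤ ∫ u in (0 : ℝ)..t, exp (-m * t) * (u ^ N / N.factorial) := by
          refine intervalIntegral.integral_mono_on_of_le_Ioo ht.le ?_ ?_ hpointwise <;>
            apply Continuous.intervalIntegrable <;> fun_prop
      _ = t ^ (N + 1) / (N + 1).factorial * exp (-m * t) := by
          rw [intervalIntegral.integral_const_mul, intervalIntegral.integral_div, integral_pow,
            Nat.factorial_succ]
          push_cast
          field_simp
          ring

end ExpDivDiff

theorem guichal_sum_of_exponentials_general (M : ℕ) (lam : ℕ → ℝ)
    (hmono : ∀ i, 1 ≤ i → i ≤ M → lam i < lam (i + 1)) :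
    let A : ℕ → ℝ := fun k => 1 / ∏ i ∈ (Finset.Icc 1 (M + 1)).erase k, (lam i - lam k)
    let q : ℝ → ℝ := fun s => ∑ i ∈ Finset.Icc 1 (M + 1), A i * Real.exp (-lam i * s)
    (∀ j, j < M → iteratedDeriv j q 0 = 0) ∧
    iteratedDeriv M q 0 = 1 ∧
    (∀ s : ℝ, 0 < s →
      0 < q s ∧ q s ≤ s ^ M / (Nat.factorial M : ℝ) * Real.exp (-lam 1 * s)) := by
  intro A q
  have hq : q = expDivDiff lam (Icc 1 (M + 1)) := rfl
  have hstrict : StrictMonoOn lam (Icc 1 (M + 1)) := by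
    rw [coe_Icc]
    refine strictMonoOn_of_lt_succ Set.ordConnected_Icc fun i _ hi hsucc => ?_
    simp only [Order.succ_eq_add_one, Set.mem_Icc] at hi hsucc ⊢
    exact hmono i hi.1 (by omega)
  have hinj : Set.InjOn lam (Icc 1 (M + 1)) := hstrict.injOn
  have hcard : #(Icc 1 (M + 1)) = M + 1 := by simp
  have hmin : ∀ i ∈ Icc 1 (M + 1), lam 1 ≤ lam i := fun i hi =>
    hstrict.monotoneOn (by simp) hi (mem_Icc.mp hi).1
  have hderiv : ∀ j ≤ M, iteratedDeriv j q 0 = if j = M then 1 else 0 := fun j hj => by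
    rw [hq, iteratedDeriv_expDivDiff_zero lam hinj (by omega), hcard, Nat.add_sub_cancel]
  refine ⟨fun j hj => ?_, ?_, fun t ht => ⟨?_, ?_⟩⟩
  · rw [hderiv j hj.le, if_neg hj.ne]
  · rw [hderiv M le_rfl, if_pos rfl]
  · exact expDivDiff_pos lam hinj hcard ht
  · exact expDivDiff_le lam hinj hcard hmin ht

theorem guichal_sum_of_exponentials (M : ℕ) (lam : ℕ → ℝ) (hl1 : 0 < lam 1)
    (hmono : ∀ i, 1 ≤ i → i ≤ M → lam i < lam (i + 1)) :
    let A : ℕ → ℝ := fun k => 1 / ∏ i ∈ (Finset.Icc 1 (M + 1)).erase k, (lam i - lam k)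
    let q : ℝ → ℝ := fun s => ∑ i ∈ Finset.Icc 1 (M + 1), A i * Real.exp (-lam i * s)
    (∀ j, j < M → iteratedDeriv j q 0 = 0) ∧
    iteratedDeriv M q 0 = 1 ∧
    (∀ s : ℝ, 0 < s →
      0 < q s ∧ q s ≤ s ^ M / (Nat.factorial M : ℝ) * Real.exp (-lam 1 * s)) :=
  guichal_sum_of_exponentials_general M lam hmono
end

section
/- Let C_1 := sup_{x > 0} (1 − e^{−x})(1 + x)/x (a finite positive number). Then for every integer N ≥ 1 and every real x ≥ 0: (1/N!) (x/(1+x))^N e^x ≤ Σ_{n=N}^∞ x^n/n! ≤ C_1 · N · (x/(1+x))^N e^x. -/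
/-!
Write `E_N(x) = ∑_{n ≥ N} xⁿ/n!` and `W_N(x) = (x/(1+x))ᴺ eˣ`. Both vanish at `0` for `N ≥ 1`, and
`E_{N+1}' = E_N`, while `u = x/(1+x)` satisfies `u' = (1-u)²`, so
`W_{N+1}' = uᴺ (u + (N+1)(1-u)²) eˣ`. For `0 ≤ u ≤ 1` the factor `u + (N+1)(1-u)²` lies between
`N/(N+1)` and `N+1`, so comparing derivatives on `[0, ∞)` propagates both bounds from `N` to
`N+1`. The lower bound starts at `E_0 = W_0 = eˣ`; the upper bound starts at
`E_1 = eˣ - 1 ≤ C₁ W_1`, which is the definition of `C₁`.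
-/

open Real Set Finset Nat

noncomputable def expTail (N : ℕ) (x : ℝ) : ℝ :=
  exp x - ∑ n ∈ range N, x ^ n / n !

noncomputable def expWeight (N : ℕ) (x : ℝ) : ℝ :=
  (x / (1 + x)) ^ N * exp x

noncomputable def expTailRatio (x : ℝ) : ℝ :=
  (1 - exp (-x)) * (1 + x) / x

noncomputable def expTailConst : ℝ :=
  sSup (expTailRatio '' Ioi 0)

theorem hasSum_expTail (N : ℕ) (x : ℝ) :
    HasSum (fun n => x ^ (n + N) / (n + N)!) (expTail N x) :=
  (hasSum_nat_add_iff' N).mpr (exp_eq_exp_ℝ ▸ NormedSpace.expSeries_div_hasSum_exp x)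

theorem expTail_zero_left (x : ℝ) : expTail 0 x = exp x := by
  simp [expTail]

theorem expTail_one_left (x : ℝ) : expTail 1 x = exp x - 1 := by
  simp [expTail]

theorem expTail_zero_right {N : ℕ} (hN : N ≠ 0) : expTail N 0 = 0 := by
  obtain ⟨M, rfl⟩ := exists_eq_succ_of_ne_zero hN
  simp [expTail, sum_range_succ']

theorem hasDerivAt_pow_succ_div_factorial (n : ℕ) (x : ℝ) :
    HasDerivAt (fun y : ℝ => y ^ (n + 1) / (n + 1)!) (x ^ n / n !) x := by
  refine ((hasDerivAt_pow (n + 1) x).div_const ((n + 1)! : ℝ)).congr_deriv ?_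
  rw [factorial_succ]
  push_cast
  field_simp

theorem hasDerivAt_sum_range_pow_div_factorial (N : ℕ) (x : ℝ) :
    HasDerivAt (fun y : ℝ => ∑ n ∈ range (N + 1), y ^ n / n !)
      (∑ n ∈ range N, x ^ n / n !) x := by
  induction N with
  | zero => simpa using hasDerivAt_const x (1 : ℝ)
  | succ N ih =>
    simp only [sum_range_succ _ (N + 1)]
    rw [sum_range_succ]
    exact ih.fun_add (hasDerivAt_pow_succ_div_factorial N x)

theorem hasDerivAt_expTail_succ (N : ℕ) (x : ℝ) :
    HasDerivAt (expTail (N + 1)) (expTail N x) x :=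
  (hasDerivAt_exp x).sub (hasDerivAt_sum_range_pow_div_factorial N x)

theorem hasDerivAt_expWeight_succ (N : ℕ) {x : ℝ} (hx : 1 + x ≠ 0) :
    HasDerivAt (expWeight (N + 1))
      ((x / (1 + x)) ^ N * (x / (1 + x) + (N + 1) * (1 - x / (1 + x)) ^ 2) * exp x) x := by
  have hu : HasDerivAt (fun y => y / (1 + y)) ((1 - x / (1 + x)) ^ 2) x := by
    refine ((hasDerivAt_id' x).div ((hasDerivAt_id' x).const_add 1) hx).congr_deriv ?_
    field_simp
    ring
  refine ((hu.fun_pow (N + 1)).fun_mul (hasDerivAt_exp x)).congr_deriv ?_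
  simp only [Nat.add_sub_cancel]
  push_cast
  ring

theorem le_on_Ici_of_hasDerivAt_le {f g f' g' : ℝ → ℝ} {a : ℝ}
    (hf : ∀ x ≥ a, HasDerivAt f (f' x) x) (hg : ∀ x ≥ a, HasDerivAt g (g' x) x)
    (ha : f a ≤ g a) (hderiv : ∀ x ≥ a, f' x ≤ g' x) {x : ℝ} (hx : a ≤ x) : f x ≤ g x := by
  have hmono : MonotoneOn (fun y => g y - f y) (Ici a) := by
    refine monotoneOn_of_hasDerivWithinAt_nonneg (f' := fun y => g' y - f' y) (convex_Ici a)
      (fun y hy => ((hg y hy).sub (hf y hy)).continuousAt.continuousWithinAt)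
      (fun y hy => ?_) (fun y hy => ?_)
    · rw [interior_Ici] at hy ⊢
      exact ((hg y hy.le).sub (hf y hy.le)).hasDerivWithinAt
    · rw [interior_Ici] at hy
      exact sub_nonneg.2 (hderiv y hy.le)
  have := hmono (mem_Ici.2 le_rfl) hx hx
  simp only at this
  linarith

theorem add_mul_one_sub_sq_le (n : ℕ) {u : ℝ} (hu₀ : 0 ≤ u) (hu₁ : u ≤ 1) :
    u + (n + 1) * (1 - u) ^ 2 ≤ n + 1 := by
  have hn : (0 : ℝ) ≤ n := n.cast_nonneg
  nlinarith [mul_nonneg hu₀ (show 0 ≤ ((n : ℝ) + 1) * (2 - u) - 1 by nlinarith)]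

theorem le_mul_add_mul_one_sub_sq (n u : ℝ) : n ≤ (n + 1) * (u + (n + 1) * (1 - u) ^ 2) := by
  nlinarith [sq_nonneg ((n + 1) * (1 - u) - 1 / 2)]

theorem expWeight_div_factorial_le_expTail (N : ℕ) {x : ℝ} (hx : 0 ≤ x) :
    expWeight N x / N ! ≤ expTail N x := by
  induction N generalizing x with
  | zero => simp [expWeight, expTail_zero_left]
  | succ N ih =>
    refine le_on_Ici_of_hasDerivAt_le
      (fun y hy => (hasDerivAt_expWeight_succ N (by linarith)).div_const _)
      (fun y _ => hasDerivAt_expTail_succ N y)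
      (by simp [expWeight, expTail_zero_right]) (fun y hy => ?_) hx
    refine le_trans ?_ (ih hy)
    have hu₀ : 0 ≤ y / (1 + y) := by positivity
    have hu₁ : y / (1 + y) ≤ 1 := div_le_one_of_le₀ (by linarith) (by linarith)
    have hB := add_mul_one_sub_sq_le N hu₀ hu₁
    rw [factorial_succ, cast_mul, ← div_div, expWeight]
    gcongr
    rw [div_le_iff₀ (by positivity)]
    calc _ ≤ (y / (1 + y)) ^ N * (N + 1) * exp y := by gcongr
      _ = _ := by push_cast; ring

theorem expTail_le_mul_expWeight {C : ℝ} (hC : 0 ≤ C)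
    (h₁ : ∀ x ≥ 0, expTail 1 x ≤ C * expWeight 1 x) {N : ℕ} (hN : 1 ≤ N) {x : ℝ} (hx : 0 ≤ x) :
    expTail N x ≤ C * N * expWeight N x := by
  induction N, hN using Nat.le_induction generalizing x with
  | base => simpa using h₁ x hx
  | succ N _ ih =>
    push_cast
    refine le_on_Ici_of_hasDerivAt_le (fun y _ => hasDerivAt_expTail_succ N y)
      (fun y hy => (hasDerivAt_expWeight_succ N (by linarith)).const_mul (C * (N + 1)))
      (by simp [expWeight, expTail_zero_right]) (fun y hy => (ih hy).trans ?_) hx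
    have hA := le_mul_add_mul_one_sub_sq N (y / (1 + y))
    have hu₀ : 0 ≤ y / (1 + y) := by positivity
    calc C * N * expWeight N y = C * (y / (1 + y)) ^ N * exp y * N := by rw [expWeight]; ring
      _ ≤ C * (y / (1 + y)) ^ N * exp y *
          ((N + 1) * (y / (1 + y) + (N + 1) * (1 - y / (1 + y)) ^ 2)) := by gcongr
      _ = _ := by ring

theorem expTailRatio_le_two {x : ℝ} (hx : 0 < x) : expTailRatio x ≤ 2 := by
  have h₁ : 1 - exp (-x) ≤ x := by linarith [add_one_le_exp (-x)]
  have h₂ : 1 - exp (-x) ≤ 1 := by linarith [exp_pos (-x)]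
  rw [expTailRatio, div_le_iff₀ hx]
  nlinarith

theorem expTailRatio_nonneg {x : ℝ} (hx : 0 ≤ x) : 0 ≤ expTailRatio x := by
  have : 0 ≤ 1 - exp (-x) := sub_nonneg.2 (exp_le_one_iff.2 (by linarith))
  rw [expTailRatio]
  positivity

theorem expTailConst_nonneg : 0 ≤ expTailConst :=
  Real.sSup_nonneg (by rintro _ ⟨x, hx, rfl⟩; exact expTailRatio_nonneg hx.le)

theorem expTail_one_le_expTailConst_mul {x : ℝ} (hx : 0 ≤ x) :
    expTail 1 x ≤ expTailConst * expWeight 1 x := by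
  rcases hx.eq_or_lt with rfl | hx
  · simp [expTail_one_left, expWeight]
  have hle : expTailRatio x ≤ expTailConst :=
    le_csSup ⟨2, by rintro _ ⟨y, hy, rfl⟩; exact expTailRatio_le_two hy⟩ ⟨x, hx, rfl⟩
  have hW : 0 ≤ expWeight 1 x := by rw [expWeight]; positivity
  calc expTail 1 x = expTailRatio x * expWeight 1 x := by
        rw [expTail_one_left, expTailRatio, expWeight, exp_neg]
        field_simp
    _ ≤ expTailConst * expWeight 1 x := by gcongr

theorem exponential_tail_estimate :
    let C₁ : ℝ := sSup ((fun x : ℝ => (1 - Real.exp (-x)) * (1 + x) / x) '' Set.Ioi 0)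
    ∀ N : ℕ, 1 ≤ N → ∀ x : ℝ, 0 ≤ x →
      (1 / (Nat.factorial N : ℝ)) * (x / (1 + x)) ^ N * Real.exp x ≤
        ∑' n : ℕ, x ^ (n + N) / (Nat.factorial (n + N) : ℝ) ∧
      ∑' n : ℕ, x ^ (n + N) / (Nat.factorial (n + N) : ℝ) ≤
        C₁ * N * (x / (1 + x)) ^ N * Real.exp x := by
  intro C₁ N hN x hx
  rw [(hasSum_expTail N x).tsum_eq]
  constructor
  · calc 1 / (N ! : ℝ) * (x / (1 + x)) ^ N * exp x = expWeight N x / N ! := by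
          rw [expWeight]; ring
      _ ≤ expTail N x := expWeight_div_factorial_le_expTail N hx
  · calc expTail N x ≤ expTailConst * N * expWeight N x :=
          expTail_le_mul_expWeight expTailConst_nonneg
            (fun _ hy => expTail_one_le_expTailConst_mul hy) hN hx
      _ = expTailConst * N * (x / (1 + x)) ^ N * exp x := by rw [expWeight]; ring
end
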